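/- arXiv:math/0607420 — 3 statements merged into one kernel-verified Lean document; each statement's English description precedes it below -/
import Mathlib

section
/- A trace t = a₁a₂⋯aₙ ∈ M(Ã,θ̃) is not reduced (i.e. is not the minimal-length representative of its image in the free partially commutative group F(A,θ)) if and only if there exist indices 1 ≤ i < j ≤ n such that a_i = ā_j and (a_k, a_i) ∈ θ̃ for every k with i < k < j. -/
namespace PCM

variable {A : Type*}

/-- Elementary commutation relation on words. -/
def TraceRel (θ : A → A → Prop) : FreeMonoid A → FreeMonoid A → Prop :=
  fun x y => ∃ a b, θ a b ∧ x = FreeMonoid.of a * FreeMonoid.of b ∧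
    y = FreeMonoid.of b * FreeMonoid.of a

/-- The congruence generated by the commutations. -/
def traceCon (θ : A → A → Prop) : Con (FreeMonoid A) := conGen (TraceRel θ)

/-- The free partially commutative (trace) monoid `M(A,θ)`. -/
abbrev Trace (A : Type*) (θ : A → A → Prop) := (traceCon θ).Quotient

/-- Canonical projection from words to traces. -/
def trMk (θ : A → A → Prop) : FreeMonoid A →* Trace A θ := (traceCon θ).mk'

/-- The trace of a single letter. -/
def trOf (θ : A → A → Prop) (a : A) : Trace A θ := trMk θ (FreeMonoid.of a)

/-- `IA t` : the set of possible initial letters of a trace. -/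
def IA (θ : A → A → Prop) (t : Trace A θ) : Set A := {a | ∃ w, t = trOf θ a * w}

/-- The alphabet of a trace. -/
def Alph (θ : A → A → Prop) (t : Trace A θ) : Set A :=
  {a | ∃ l : List A, trMk θ (FreeMonoid.ofList l) = t ∧ a ∈ l}

/-- The submonoid `M(B,θ_B)` generated by a subalphabet. -/
def subTr (θ : A → A → Prop) (B : Set A) : Submonoid (Trace A θ) :=
  Submonoid.closure (trOf θ '' B)

/-- `β_Z(B)` where `Z = A - B`. -/
def beta (θ : A → A → Prop) (B : Set A) : Set (Trace A θ) :=
  {t | ∃ z, z ∉ B ∧ ∃ w ∈ subTr θ B, t = trOf θ z * w ∧ IA θ t = {z}}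

/-- The induced independence relation `θ_X` on a set of traces. -/
def thetaX (θ : A → A → Prop) (X : Set (Trace A θ)) (x y : X) : Prop :=
  ∀ a ∈ Alph θ (x : Trace A θ), ∀ b ∈ Alph θ (y : Trace A θ), θ a b

/-- `X` is a partially commutative code : the canonical morphism from
`M(X,θ_X)` is injective. -/
def IsPCCode (θ : A → A → Prop) (X : Set (Trace A θ)) : Prop :=
  ∃ f : Trace X (thetaX θ X) →* Trace A θ,
    (∀ x : X, f (trOf (thetaX θ X) x) = (x : Trace A θ)) ∧ Function.Injective f

/-- Dependence relation (edges of the dependence graph). -/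
def dep (θ : A → A → Prop) (a b : A) : Prop := a ≠ b ∧ ¬ θ a b

/-- A path `z - b₁ - ⋯ - bₙ - z'` in the dependence graph with inner vertices in `B`. -/
def DepPathB (θ : A → A → Prop) (B : Set A) (z z' : A) : Prop :=
  ∃ l : List A, (∀ b ∈ l, b ∈ B) ∧ List.Chain (dep θ) z (l ++ [z'])

/-- `B` is a transitively factorizing subalphabet. -/
def IsTFSA (θ : A → A → Prop) (B : Set A) : Prop :=
  ∀ z z', z ∉ B → z' ∉ B → θ z z' → ¬ DepPathB θ B z z'

end PCM

namespace PCM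

variable {A : Type*}

/-- Forget the bar of a signed letter of `Ã = A ∪ Ā`. -/
def unbar : A ⊕ A → A := Sum.elim id id

/-- The independence relation `θ̃` on `Ã = A ∪ Ā`. -/
def tilde (θ : A → A → Prop) : (A ⊕ A) → (A ⊕ A) → Prop :=
  fun x y => θ (unbar x) (unbar y)

/-- Commutation relators for the free partially commutative group. -/
def pcRels (θ : A → A → Prop) : Set (FreeGroup A) :=
  {w | ∃ a b, θ a b ∧
    w = FreeGroup.of a * FreeGroup.of b * (FreeGroup.of a)⁻¹ * (FreeGroup.of b)⁻¹}

/-- The free partially commutative group `F(A,θ)`. -/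
abbrev PCGroup (A : Type*) (θ : A → A → Prop) := PresentedGroup (pcRels θ)

/-- The generator of `F(A,θ)` corresponding to a letter. -/
def gOf (θ : A → A → Prop) (a : A) : PCGroup A θ := PresentedGroup.of a

/-- A trace has length `n`. -/
def HasLen (θ : A → A → Prop) (t : Trace A θ) (n : ℕ) : Prop :=
  ∃ l : List A, trMk θ (FreeMonoid.ofList l) = t ∧ l.length = n

/-- `s` is the canonical morphism `M(Ã,θ̃) → F(A,θ)`. -/
def IsSection (θ : A → A → Prop)
    (s : Trace (A ⊕ A) (tilde θ) →* PCGroup A θ) : Prop :=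
  (∀ a : A, s (trOf (tilde θ) (Sum.inl a)) = gOf θ a) ∧
  (∀ a : A, s (trOf (tilde θ) (Sum.inr a)) = (gOf θ a)⁻¹)

/-- A trace over `Ã` is reduced: it has minimal length in its fiber under `s`. -/
def ReducedWrt (θ : A → A → Prop)
    (s : Trace (A ⊕ A) (tilde θ) →* PCGroup A θ)
    (t : Trace (A ⊕ A) (tilde θ)) : Prop :=
  ∀ (t' : Trace (A ⊕ A) (tilde θ)) (n n' : ℕ),
    s t' = s t → HasLen (tilde θ) t n → HasLen (tilde θ) t' n' → n ≤ n'

/-- `ρ_Z(B) = {w⁻¹zw | zw ∈ β_Z^R(B̃)}` inside `F(A,θ)`. -/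
def rhoSet (θ : A → A → Prop) (B : Set A)
    (s : Trace (A ⊕ A) (tilde θ) →* PCGroup A θ) : Set (PCGroup A θ) :=
  {g | ∃ z, z ∉ B ∧ ∃ wl : List (A ⊕ A), (∀ x ∈ wl, unbar x ∈ B) ∧
    IA (tilde θ) (trMk (tilde θ) (FreeMonoid.ofList (Sum.inl z :: wl))) = {Sum.inl z} ∧
    ReducedWrt θ s (trMk (tilde θ) (FreeMonoid.ofList (Sum.inl z :: wl))) ∧
    g = (s (trMk (tilde θ) (FreeMonoid.ofList wl)))⁻¹ * gOf θ z *
        s (trMk (tilde θ) (FreeMonoid.ofList wl))}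

/-- The set `β_Z^R(B̃)` of reduced traces `zw`. -/
def betaR (θ : A → A → Prop) (B : Set A)
    (s : Trace (A ⊕ A) (tilde θ) →* PCGroup A θ) : Set (Trace (A ⊕ A) (tilde θ)) :=
  {t | ∃ z, z ∉ B ∧ ∃ wl : List (A ⊕ A), (∀ x ∈ wl, unbar x ∈ B) ∧
    t = trMk (tilde θ) (FreeMonoid.ofList (Sum.inl z :: wl)) ∧
    IA (tilde θ) t = {Sum.inl z} ∧ ReducedWrt θ s t}

end PCM

namespace Stmt17

open PCM

variable {A : Type*} {θ : A → A → Prop}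

@[simp] lemma unbar_swap (x : A ⊕ A) : unbar (Sum.swap x) = unbar x := by
  cases x <;> rfl

lemma tilde_swap_left {x y : A ⊕ A} (h : tilde θ x y) : tilde θ (Sum.swap x) y := by
  simpa [tilde, unbar_swap] using h

lemma tilde_swap_right {x y : A ⊕ A} (h : tilde θ x y) : tilde θ x (Sum.swap y) := by
  simpa [tilde, unbar_swap] using h

lemma tilde_symm (hsymm : ∀ a b, θ a b → θ b a) {x y : A ⊕ A} (h : tilde θ x y) :
    tilde θ y x := hsymm _ _ h

/-- Abbreviation: the trace of a word. -/
def tmk (θ : A → A → Prop) (l : List (A ⊕ A)) : Trace (A ⊕ A) (tilde θ) :=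
  trMk (tilde θ) (FreeMonoid.ofList l)

lemma tmk_append (l₁ l₂ : List (A ⊕ A)) : tmk θ (l₁ ++ l₂) = tmk θ l₁ * tmk θ l₂ := by
  rw [tmk, FreeMonoid.ofList_append, map_mul]; rfl

lemma tmk_eq_iff {l m : List (A ⊕ A)} :
    tmk θ l = tmk θ m ↔ traceCon (tilde θ) (FreeMonoid.ofList l) (FreeMonoid.ofList m) := by
  rw [tmk, tmk, trMk]
  rw [show ((traceCon (tilde θ)).mk' (FreeMonoid.ofList l)) =
    ((FreeMonoid.ofList l : FreeMonoid (A ⊕ A)) : (traceCon (tilde θ)).Quotient) from rfl]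
  rw [show ((traceCon (tilde θ)).mk' (FreeMonoid.ofList m)) =
    ((FreeMonoid.ofList m : FreeMonoid (A ⊕ A)) : (traceCon (tilde θ)).Quotient) from rfl]
  exact Con.eq _

/-- General (non-adjacent) cancellation step on words. -/
def CancP (θ : A → A → Prop) (l l' : List (A ⊕ A)) : Prop :=
  ∃ (u v w : List (A ⊕ A)) (x : A ⊕ A), (∀ c ∈ v, tilde θ c x) ∧
    l = u ++ x :: (v ++ Sum.swap x :: w) ∧ l' = u ++ (v ++ w)

/-- Adjacent swap of independent letters. -/
def AdjSw (θ : A → A → Prop) (l l' : List (A ⊕ A)) : Prop :=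
  ∃ (p q : List (A ⊕ A)) (a b : A ⊕ A), tilde θ a b ∧
    l = p ++ a :: b :: q ∧ l' = p ++ b :: a :: q

lemma AdjSw.symm (hsymm : ∀ a b, θ a b → θ b a) {l l' : List (A ⊕ A)}
    (h : AdjSw θ l l') : AdjSw θ l' l := by
  obtain ⟨p, q, a, b, hab, h1, h2⟩ := h
  exact ⟨p, q, b, a, tilde_symm hsymm hab, h2, h1⟩

lemma tmk_of_adjSw {l l' : List (A ⊕ A)} (h : AdjSw θ l l') : tmk θ l = tmk θ l' := by
  obtain ⟨p, q, a, b, hab, h1, h2⟩ := h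
  subst h1 h2
  rw [tmk_eq_iff]
  have : traceCon (tilde θ) (FreeMonoid.ofList [a, b]) (FreeMonoid.ofList [b, a]) :=
    ConGen.Rel.of _ _ ⟨a, b, hab, rfl, rfl⟩
  have h2 := Con.mul (traceCon (tilde θ)) (this) (ConGen.Rel.refl (FreeMonoid.ofList q))
  have h3 := Con.mul (traceCon (tilde θ)) (ConGen.Rel.refl (FreeMonoid.ofList p)) h2
  simpa [FreeMonoid.ofList_append, FreeMonoid.ofList_cons, FreeMonoid.ofList_nil, mul_assoc, mul_one] using h3

/-- Words mapping to the same trace are connected by adjacent swaps. -/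
lemma eqvGen_adjSw_of_tmk_eq {l m : List (A ⊕ A)} (h : tmk θ l = tmk θ m) :
    Relation.EqvGen (AdjSw θ) l m := by
  -- build a congruence out of `EqvGen (AdjSw θ)` on the free monoid
  have compat : ∀ (u : List (A ⊕ A)) {a b : List (A ⊕ A)},
      Relation.EqvGen (AdjSw θ) a b →
      Relation.EqvGen (AdjSw θ) (u ++ a) (u ++ b) ∧
      Relation.EqvGen (AdjSw θ) (a ++ u) (b ++ u) := by
    intro u a b hab
    induction hab with
    | rel x y hxy =>
      obtain ⟨p, q, c, d, hcd, h1, h2⟩ := hxy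
      subst h1 h2
      constructor
      · exact Relation.EqvGen.rel _ _ ⟨u ++ p, q, c, d, hcd, by simp, by simp⟩
      · exact Relation.EqvGen.rel _ _ ⟨p, q ++ u, c, d, hcd, by simp, by simp⟩
    | refl x => exact ⟨Relation.EqvGen.refl _, Relation.EqvGen.refl _⟩
    | symm x y _ ih => exact ⟨(ih.1).symm _ _, (ih.2).symm _ _⟩
    | trans x y z _ _ ih1 ih2 =>
      exact ⟨(ih1.1).trans _ _ _ (ih2.1), (ih1.2).trans _ _ _ (ih2.2)⟩
  let c : Con (FreeMonoid (A ⊕ A)) :=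
    { r := fun a b => Relation.EqvGen (AdjSw θ) a.toList b.toList
      iseqv := ⟨fun _ => Relation.EqvGen.refl _, fun h => h.symm _ _,
        fun h1 h2 => h1.trans _ _ _ h2⟩
      mul' := by
        intro a b c' d h1 h2
        have t1 := (compat c'.toList h1).2
        have t2 := (compat b.toList h2).1
        exact (t1.trans _ _ _ t2)
      }
  have hle : traceCon (tilde θ) ≤ c := by
    apply Con.conGen_le.2
    rintro x y ⟨a, b, hab, h1, h2⟩
    subst h1 h2
    exact Relation.EqvGen.rel _ _ ⟨[], [], a, b, hab, rfl, rfl⟩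
  exact hle (tmk_eq_iff.mp h)

lemma length_eq_of_tmk_eq {l m : List (A ⊕ A)} (h : tmk θ l = tmk θ m) :
    l.length = m.length := by
  have hh := eqvGen_adjSw_of_tmk_eq h
  clear h
  induction hh with
  | rel x y hxy => obtain ⟨p, q, a, b, _, h1, h2⟩ := hxy; subst h1 h2; simp
  | refl x => rfl
  | symm x y _ ih => exact ih.symm
  | trans x y z _ _ ih1 ih2 => exact ih1.trans ih2

end Stmt17
namespace Stmt17

open PCM

variable {A : Type*} {θ : A → A → Prop}

lemma tmk_cons (a : A ⊕ A) (l : List (A ⊕ A)) :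
    tmk θ (a :: l) = trOf (tilde θ) a * tmk θ l := by
  rw [tmk, FreeMonoid.ofList_cons, map_mul]; rfl

lemma tmk_block (hsymm : ∀ a b, θ a b → θ b a) {x : A ⊕ A} {v : List (A ⊕ A)}
    (hv : ∀ c ∈ v, tilde θ c x) (q : List (A ⊕ A)) :
    tmk θ (x :: (v ++ q)) = tmk θ (v ++ x :: q) := by
  induction v with
  | nil => rfl
  | cons c v ih =>
    have h1 : tmk θ (x :: (c :: v ++ q)) = tmk θ (c :: (x :: (v ++ q))) :=
      tmk_of_adjSw ⟨[], v ++ q, x, c, tilde_symm hsymm (hv c (by simp)), rfl, rfl⟩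
    rw [h1, tmk_cons, ih (fun c hc => hv c (by simp [hc])), ← tmk_cons]
    rfl

lemma tmk_block' (hsymm : ∀ a b, θ a b → θ b a) {x : A ⊕ A} {v : List (A ⊕ A)}
    (hv : ∀ c ∈ v, tilde θ c x) (p q : List (A ⊕ A)) :
    tmk θ (p ++ x :: (v ++ q)) = tmk θ (p ++ (v ++ x :: q)) :=
  calc tmk θ (p ++ x :: (v ++ q)) = tmk θ p * tmk θ (x :: (v ++ q)) := tmk_append _ _
    _ = tmk θ p * tmk θ (v ++ x :: q) := by rw [tmk_block hsymm hv q]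
    _ = tmk θ (p ++ (v ++ x :: q)) := (tmk_append _ _).symm

lemma cancP_iff_pair (l : List (A ⊕ A)) :
    (∃ l', CancP θ l l') ↔
      ∃ i j : Fin l.length, i < j ∧ l.get i = Sum.swap (l.get j) ∧
        ∀ k : Fin l.length, i < k → k < j → tilde θ (l.get k) (l.get i) := by
  constructor
  · rintro ⟨l', u, v, w, x, hv, hl, -⟩
    subst hl
    have hlen : (u ++ x :: (v ++ Sum.swap x :: w)).length
        = u.length + v.length + w.length + 2 := by simp; omega
    have h1 : (u ++ x :: (v ++ Sum.swap x :: w))[u.length]'(by omega) = x := by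
      rw [List.getElem_append_right (le_refl u.length)]
      simp
    have h2 : (u ++ x :: (v ++ Sum.swap x :: w))[u.length + v.length + 1]'(by omega)
        = Sum.swap x := by
      rw [List.getElem_append_right (by omega : u.length ≤ u.length + v.length + 1)]
      simp only [show u.length + v.length + 1 - u.length = v.length + 1 from by omega,
        List.getElem_cons_succ]
      rw [List.getElem_append_right (le_refl v.length)]
      simp
    refine ⟨⟨u.length, by omega⟩, ⟨u.length + v.length + 1, by omega⟩, by simp only [Fin.lt_def]; omega,
      ?_, ?_⟩
    · simp only [List.get_eq_getElem]
      rw [h1, h2, Sum.swap_swap]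
    · intro k hk1 hk2
      simp only [Fin.lt_def] at hk1 hk2
      have hk : u.length < (k : ℕ) := hk1
      have hk' : (k : ℕ) < u.length + v.length + 1 := hk2
      have hmem : (u ++ x :: (v ++ Sum.swap x :: w))[(k : ℕ)]'(k.isLt) ∈ v := by
        rw [List.getElem_append_right (by omega : u.length ≤ (k : ℕ))]
        obtain ⟨d, hd, hd2⟩ : ∃ d, (k : ℕ) - u.length = d + 1 ∧ d < v.length :=
          ⟨(k : ℕ) - u.length - 1, by omega, by omega⟩
        simp only [hd, List.getElem_cons_succ]
        rw [List.getElem_append_left hd2]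
        exact List.getElem_mem _
      have hres := hv _ hmem
      simp only [List.get_eq_getElem]
      rw [h1]
      exact hres
  · rintro ⟨i, j, hij, hswap, hbet⟩
    have hi : (i : ℕ) < l.length := i.isLt
    have hj : (j : ℕ) < l.length := j.isLt
    have hij' : (i : ℕ) < (j : ℕ) := hij
    have hdecomp : l = l.take i ++ l[(i : ℕ)] ::
        ((l.drop (i + 1)).take ((j : ℕ) - i - 1) ++ l[(j : ℕ)] :: l.drop (j + 1)) := by
      conv_lhs => rw [← List.take_append_drop (i : ℕ) l]
      congr 1
      rw [List.drop_eq_getElem_cons hi]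
      congr 1
      conv_lhs => rw [← List.take_append_drop ((j : ℕ) - i - 1) (l.drop ((i : ℕ) + 1))]
      congr 1
      rw [List.drop_drop]
      rw [show (i : ℕ) + 1 + ((j : ℕ) - i - 1) = (j : ℕ) from by omega,
        List.drop_eq_getElem_cons hj]
    have hyx : l[(j : ℕ)] = Sum.swap (l[(i : ℕ)]'hi) := by
      simp only [List.get_eq_getElem] at hswap
      rw [hswap, Sum.swap_swap]
    have hcom : ∀ c ∈ (l.drop (i + 1)).take ((j : ℕ) - i - 1), tilde θ c (l[(i : ℕ)]'hi) := by
      intro c hc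
      rw [List.mem_iff_getElem] at hc
      obtain ⟨n, hn, hcn⟩ := hc
      have hn' : n < (j : ℕ) - i - 1 := by
        simp only [List.length_take, List.length_drop] at hn; omega
      have : c = l[(i : ℕ) + 1 + n]'(by omega) := by
        rw [← hcn]; simp [Nat.add_assoc]
      rw [this]
      have := hbet ⟨(i : ℕ) + 1 + n, by omega⟩ (by simp [Fin.lt_def]; omega)
        (by simp [Fin.lt_def]; omega)
      simpa using this
    refine ⟨_, l.take i, (l.drop (i + 1)).take ((j : ℕ) - i - 1), l.drop (j + 1),
      l[(i : ℕ)], hcom, ?_, rfl⟩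
    rw [← hyx]; exact hdecomp

end Stmt17
namespace Stmt17

open PCM

variable {A : Type*} {θ : A → A → Prop}

/-- Cancellation relators. -/
def CancRel (θ : A → A → Prop) : FreeMonoid (A ⊕ A) → FreeMonoid (A ⊕ A) → Prop :=
  fun g h => (∃ x : A ⊕ A, g = FreeMonoid.ofList [x, Sum.swap x]) ∧ h = 1

/-- Congruence defining the free partially commutative group as a quotient monoid. -/
def gCon (θ : A → A → Prop) : Con (FreeMonoid (A ⊕ A)) :=
  conGen (fun a b => TraceRel (tilde θ) a b ∨ CancRel θ a b)

abbrev Q (θ : A → A → Prop) := (gCon (A := A) θ).Quotient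

def gmk (θ : A → A → Prop) (l : List (A ⊕ A)) : Q θ := (gCon θ).mk' (FreeMonoid.ofList l)

lemma gmk_eq_iff {l m : List (A ⊕ A)} :
    gmk θ l = gmk θ m ↔ gCon θ (FreeMonoid.ofList l) (FreeMonoid.ofList m) :=
  Con.eq _

lemma gmk_append (l₁ l₂ : List (A ⊕ A)) : gmk θ (l₁ ++ l₂) = gmk θ l₁ * gmk θ l₂ := by
  rw [gmk, FreeMonoid.ofList_append, map_mul]; rfl

lemma gmk_nil : gmk θ ([] : List (A ⊕ A)) = 1 := rfl

lemma gmk_pair (x : A ⊕ A) : gmk θ [x, Sum.swap x] = 1 := by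
  have : gCon θ (FreeMonoid.ofList [x, Sum.swap x]) 1 :=
    ConGen.Rel.of _ _ (Or.inr ⟨⟨x, rfl⟩, rfl⟩)
  simpa [gmk] using (Con.eq _).mpr this

lemma gmk_cancel (p q : List (A ⊕ A)) (x : A ⊕ A) :
    gmk θ (p ++ x :: Sum.swap x :: q) = gmk θ (p ++ q) := by
  have h : (p ++ x :: Sum.swap x :: q) = p ++ ([x, Sum.swap x] ++ q) := by simp
  rw [h, gmk_append, gmk_append, gmk_pair, one_mul, ← gmk_append]

lemma gmk_swap {a b : A ⊕ A} (hab : tilde θ a b) (p q : List (A ⊕ A)) :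
    gmk θ (p ++ a :: b :: q) = gmk θ (p ++ b :: a :: q) := by
  have h1 : gCon θ (FreeMonoid.ofList [a, b]) (FreeMonoid.ofList [b, a]) :=
    ConGen.Rel.of _ _ (Or.inl ⟨a, b, hab, rfl, rfl⟩)
  have h2 := Con.mul (gCon θ) h1 (ConGen.Rel.refl (FreeMonoid.ofList q))
  have h3 := Con.mul (gCon θ) (ConGen.Rel.refl (FreeMonoid.ofList p)) h2
  rw [gmk_eq_iff]
  simpa [FreeMonoid.ofList_append, FreeMonoid.ofList_cons, FreeMonoid.ofList_nil, mul_assoc, mul_one] using h3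

/-- The inverse word. -/
def winv (l : List (A ⊕ A)) : List (A ⊕ A) := (l.map Sum.swap).reverse

lemma gmk_winv_mul (l : List (A ⊕ A)) : gmk θ (winv l ++ l) = 1 := by
  induction l with
  | nil => rfl
  | cons x l ih =>
    have h : winv (x :: l) ++ x :: l = winv l ++ Sum.swap x :: Sum.swap (Sum.swap x) :: l := by
      simp [winv, Sum.swap_swap]
    rw [h, gmk_cancel, ih]

def qinvHom (θ : A → A → Prop) : FreeMonoid (A ⊕ A) →* (Q θ)ᵐᵒᵖ :=
  FreeMonoid.lift (fun x => MulOpposite.op (gmk θ [Sum.swap x]))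

lemma qinvHom_ofList (l : List (A ⊕ A)) :
    qinvHom θ (FreeMonoid.ofList l) = MulOpposite.op (gmk θ (winv l)) := by
  induction l with
  | nil => simp [winv, gmk_nil, qinvHom]
  | cons x l ih =>
    rw [FreeMonoid.ofList_cons, map_mul, ih]
    show MulOpposite.op (gmk θ [Sum.swap x]) * _ = _
    rw [← MulOpposite.op_mul, ← gmk_append]
    simp [winv]

lemma gCon_le_ker_qinvHom (hsymm : ∀ a b, θ a b → θ b a) :
    gCon θ ≤ Con.ker (qinvHom θ) := by
  apply Con.conGen_le.2
  rintro x y (⟨a, b, hab, h1, h2⟩ | ⟨⟨c, h1⟩, h2⟩)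
  · subst h1 h2
    show qinvHom θ _ = qinvHom θ _
    have e1 : FreeMonoid.of a * FreeMonoid.of b = FreeMonoid.ofList [a, b] := rfl
    have e2 : FreeMonoid.of b * FreeMonoid.of a = FreeMonoid.ofList [b, a] := rfl
    rw [e1, e2, qinvHom_ofList, qinvHom_ofList]
    have : gmk θ (winv [a, b]) = gmk θ (winv [b, a]) := by
      have := gmk_swap (a := Sum.swap b) (b := Sum.swap a)
        (by simpa [tilde] using tilde_symm hsymm hab) ([] : List (A ⊕ A)) ([] : List (A ⊕ A))
      simpa [winv] using this
    rw [this]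
  · subst h1 h2
    show qinvHom θ _ = qinvHom θ _
    rw [qinvHom_ofList, map_one]
    have : gmk θ (winv [c, Sum.swap c]) = 1 := by
      have := gmk_pair (θ := θ) c
      simpa [winv, Sum.swap_swap] using this
    rw [this]; rfl

def qInv (hsymm : ∀ a b, θ a b → θ b a) : Q θ →* (Q θ)ᵐᵒᵖ :=
  Con.lift _ (qinvHom θ) (gCon_le_ker_qinvHom hsymm)

def qGroup (hsymm : ∀ a b, θ a b → θ b a) : Group (Q θ) :=
  { (inferInstance : Monoid (Q θ)) with
    inv := fun q => (qInv hsymm q).unop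
    inv_mul_cancel := by
      intro q
      induction q using Con.induction_on with
      | H w =>
        show ((qInv hsymm) ((gCon θ).mk' w)).unop * (gCon θ).mk' w = 1
        rw [qInv, Con.lift_mk']
        have : w = FreeMonoid.ofList w.toList := rfl
        rw [this, qinvHom_ofList]
        show gmk θ (winv w.toList) * gmk θ w.toList = 1
        rw [← gmk_append, gmk_winv_mul] }

end Stmt17
namespace Stmt17

open PCM

variable {A : Type*} {θ : A → A → Prop}

lemma gcon_of_s_eq (hsymm : ∀ a b, θ a b → θ b a)
    {s : Trace (A ⊕ A) (tilde θ) →* PCGroup A θ} (hs : IsSection θ s)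
    {l m : List (A ⊕ A)} (h : s (tmk θ l) = s (tmk θ m)) :
    gCon θ (FreeMonoid.ofList l) (FreeMonoid.ofList m) := by
  letI : Group (Q θ) := qGroup hsymm
  have hrels : ∀ r ∈ pcRels θ, FreeGroup.lift (fun a => (gmk θ [Sum.inl a] : Q θ)) r = 1 := by
    rintro r ⟨a, b, hab, rfl⟩
    rw [map_mul, map_mul, map_mul, map_inv, map_inv, FreeGroup.lift_apply_of, FreeGroup.lift_apply_of]
    have hcomm : (gmk θ [Sum.inl a] : Q θ) * gmk θ [Sum.inl b]
        = gmk θ [Sum.inl b] * gmk θ [Sum.inl a] := by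
      rw [← gmk_append, ← gmk_append]
      exact gmk_swap (by exact hab : tilde θ (Sum.inl a) (Sum.inl b)) [] _
    rw [hcomm, mul_assoc, mul_assoc, ← mul_assoc (gmk θ [Sum.inl a])]
    erw [mul_inv_cancel, one_mul, mul_inv_cancel]
    rfl
  let φ : PCGroup A θ →* Q θ := PresentedGroup.toGroup hrels
  have hφof : ∀ a : A, φ (gOf θ a) = gmk θ [Sum.inl a] := fun a =>
    PresentedGroup.toGroup.of hrels
  have hinv : ∀ a : A, (gmk θ [Sum.inl a] : Q θ)⁻¹ = gmk θ [Sum.inr a] := by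
    intro a
    refine inv_eq_of_mul_eq_one_right ?_
    exact (gmk_append (θ := θ) [Sum.inl a] [Sum.inr a]).symm.trans (gmk_pair (Sum.inl a))
  have key : ∀ w : List (A ⊕ A), φ (s (tmk θ w)) = gmk θ w := by
    have homeq : (φ.comp (s.comp (trMk (tilde θ)))) = (gCon θ).mk' := by
      apply FreeMonoid.hom_eq
      intro x
      cases x with
      | inl a =>
        show φ (s (trOf (tilde θ) (Sum.inl a))) = (gCon θ).mk' (FreeMonoid.of (Sum.inl a))
        rw [hs.1 a, hφof a]; rfl
      | inr a =>
        show φ (s (trOf (tilde θ) (Sum.inr a))) = (gCon θ).mk' (FreeMonoid.of (Sum.inr a))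
        rw [hs.2 a, map_inv, hφof a, hinv a]; rfl
    intro w
    have := congrArg (fun f : FreeMonoid (A ⊕ A) →* Q θ => f (FreeMonoid.ofList w)) homeq
    simpa [tmk, gmk] using this
  have : gmk θ l = gmk θ m := by rw [← key l, ← key m, h]
  exact gmk_eq_iff.mp this

/-- Adjacent cancellation step on words. -/
def CancStep (θ : A → A → Prop) (l l' : List (A ⊕ A)) : Prop :=
  ∃ (p q : List (A ⊕ A)) (x : A ⊕ A), l = p ++ x :: Sum.swap x :: q ∧ l' = p ++ q

def StepRel (θ : A → A → Prop) (l l' : List (A ⊕ A)) : Prop :=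
  AdjSw θ l l' ∨ CancStep θ l l'

lemma cancP_of_cancStep {l l' : List (A ⊕ A)} (h : CancStep θ l l') : CancP θ l l' := by
  obtain ⟨p, q, x, h1, h2⟩ := h
  exact ⟨p, [], q, x, by simp, by simpa using h1, by simpa using h2⟩

lemma eqvGen_step_of_gcon {l m : List (A ⊕ A)}
    (h : gCon θ (FreeMonoid.ofList l) (FreeMonoid.ofList m)) :
    Relation.EqvGen (StepRel θ) l m := by
  have compat : ∀ (u : List (A ⊕ A)) {a b : List (A ⊕ A)},
      Relation.EqvGen (StepRel θ) a b →
      Relation.EqvGen (StepRel θ) (u ++ a) (u ++ b) ∧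
      Relation.EqvGen (StepRel θ) (a ++ u) (b ++ u) := by
    intro u a b hab
    induction hab with
    | rel x y hxy =>
      rcases hxy with ⟨p, q, c, d, hcd, h1, h2⟩ | ⟨p, q, c, h1, h2⟩
      · subst h1 h2
        exact ⟨Relation.EqvGen.rel _ _ (Or.inl ⟨u ++ p, q, c, d, hcd, by simp, by simp⟩),
          Relation.EqvGen.rel _ _ (Or.inl ⟨p, q ++ u, c, d, hcd, by simp, by simp⟩)⟩
      · subst h1 h2
        exact ⟨Relation.EqvGen.rel _ _ (Or.inr ⟨u ++ p, q, c, by simp, by simp⟩),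
          Relation.EqvGen.rel _ _ (Or.inr ⟨p, q ++ u, c, by simp, by simp⟩)⟩
    | refl x => exact ⟨Relation.EqvGen.refl _, Relation.EqvGen.refl _⟩
    | symm x y _ ih => exact ⟨(ih.1).symm _ _, (ih.2).symm _ _⟩
    | trans x y z _ _ ih1 ih2 =>
      exact ⟨(ih1.1).trans _ _ _ (ih2.1), (ih1.2).trans _ _ _ (ih2.2)⟩
  let c : Con (FreeMonoid (A ⊕ A)) :=
    { r := fun a b => Relation.EqvGen (StepRel θ) a.toList b.toList
      iseqv := ⟨fun _ => Relation.EqvGen.refl _, fun h => h.symm _ _,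
        fun h1 h2 => h1.trans _ _ _ h2⟩
      mul' := by
        intro a b c' d h1 h2
        have t1 := (compat c'.toList h1).2
        have t2 := (compat b.toList h2).1
        exact (t1.trans _ _ _ t2) }
  have hle : gCon θ ≤ c := by
    apply Con.conGen_le.2
    rintro x y (⟨a, b, hab, h1, h2⟩ | ⟨⟨d, h1⟩, h2⟩)
    · subst h1 h2
      exact Relation.EqvGen.rel _ _ (Or.inl ⟨[], [], a, b, hab, rfl, rfl⟩)
    · subst h1 h2
      exact Relation.EqvGen.rel _ _ (Or.inr ⟨[], [], d, rfl, rfl⟩)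
  exact hle h

/-- The cancellation rewriting relation on traces. -/
def TStep (θ : A → A → Prop) (T T' : Trace (A ⊕ A) (tilde θ)) : Prop :=
  ∃ l l' : List (A ⊕ A), tmk θ l = T ∧ tmk θ l' = T' ∧ CancP θ l l'

lemma eqvGen_tstep_of_step {l m : List (A ⊕ A)}
    (h : Relation.EqvGen (StepRel θ) l m) :
    Relation.EqvGen (TStep θ) (tmk θ l) (tmk θ m) := by
  induction h with
  | rel x y hxy =>
    rcases hxy with hsw | hcs
    · rw [tmk_of_adjSw hsw]
      exact Relation.EqvGen.refl _
    · exact Relation.EqvGen.rel _ _ ⟨x, y, rfl, rfl, cancP_of_cancStep hcs⟩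
  | refl x => exact Relation.EqvGen.refl _
  | symm x y _ ih => exact ih.symm _ _
  | trans x y z _ _ ih1 ih2 => exact ih1.trans _ _ _ ih2

end Stmt17
namespace Stmt17

open PCM

variable {A : Type*} {θ : A → A → Prop}

@[simp] lemma tilde_swap_left_iff {x y : A ⊕ A} :
    tilde θ (Sum.swap x) y ↔ tilde θ x y := by simp [tilde]

@[simp] lemma tilde_swap_right_iff {x y : A ⊕ A} :
    tilde θ x (Sum.swap y) ↔ tilde θ x y := by simp [tilde]

lemma not_tilde_swap (hanti : ∀ a, ¬ θ a a) (x : A ⊕ A) : ¬ tilde θ x (Sum.swap x) := by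
  simpa [tilde] using hanti (unbar x)

set_option maxHeartbeats 1000000 in
/-- Transfer of a cancellable pair along an adjacent swap. -/
lemma cancP_transfer_adjSw (hanti : ∀ a, ¬ θ a a) (hsymm : ∀ a b, θ a b → θ b a)
    {m₁ m₂ l₁ : List (A ⊕ A)} (hsw : AdjSw θ m₁ m₂) (hc : CancP θ m₁ l₁) :
    ∃ l₂, CancP θ m₂ l₂ ∧ tmk θ l₁ = tmk θ l₂ := by
  obtain ⟨p, q, a, b, hab, hm₁, hm₂⟩ := hsw
  obtain ⟨u, v, w, x, hv, hm₁', hl₁⟩ := hc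
  subst hm₂ hl₁
  have heq : p ++ a :: b :: q = u ++ x :: (v ++ Sum.swap x :: w) := by
    rw [← hm₁, hm₁']
  clear hm₁ hm₁'
  rcases List.append_eq_append_iff.mp heq with ⟨e, hu, he⟩ | ⟨e, hp, he⟩
  · -- u = p ++ e,  a :: b :: q = e ++ x :: (v ++ x̄ :: w)
    subst hu
    rcases e with _ | ⟨a₁, e⟩
    · simp only [List.nil_append, List.cons.injEq] at he
      obtain ⟨h1, he⟩ := he
      rcases v with _ | ⟨c, v'⟩
      · simp only [List.nil_append, List.cons.injEq] at he
        obtain ⟨h2, -⟩ := he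
        subst h1 h2
        exact absurd hab (not_tilde_swap hanti a)
      · simp only [List.cons_append, List.cons.injEq] at he
        obtain ⟨h2, h3⟩ := he
        subst h1 h2 h3
        refine ⟨(p ++ [b]) ++ (v' ++ w), ⟨p ++ [b], v', w, a,
          fun c hc => hv c (List.mem_cons_of_mem _ hc), by simp, rfl⟩, by simp⟩
    · simp only [List.cons_append, List.cons.injEq] at he
      obtain ⟨h1, he⟩ := he
      rcases e with _ | ⟨b₁, e⟩
      · simp only [List.nil_append, List.cons.injEq] at he
        obtain ⟨h2, h3⟩ := he
        subst h1 h2 h3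
        refine ⟨p ++ ((a :: v) ++ w), ⟨p, a :: v, w, b, ?_, by simp, rfl⟩, by simp⟩
        intro c hc
        rcases List.mem_cons.mp hc with rfl | hc
        · exact hab
        · exact hv c hc
      · simp only [List.cons_append, List.cons.injEq] at he
        obtain ⟨h2, h3⟩ := he
        subst h1 h2 h3
        refine ⟨(p ++ b :: a :: e) ++ (v ++ w), ⟨p ++ b :: a :: e, v, w, x, hv,
          by simp, rfl⟩, ?_⟩
        exact tmk_of_adjSw ⟨p, e ++ (v ++ w), a, b, hab, by simp, by simp⟩
  · -- p = u ++ e,  x :: (v ++ x̄ :: w) = e ++ a :: b :: q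
    subst hp
    rcases e with _ | ⟨x₁, e⟩
    · simp only [List.nil_append, List.cons.injEq] at he
      obtain ⟨h1, he⟩ := he
      rcases v with _ | ⟨c, v'⟩
      · simp only [List.nil_append, List.cons.injEq] at he
        obtain ⟨h2, -⟩ := he
        subst h1 h2
        exact absurd hab (not_tilde_swap hanti _)
      · simp only [List.cons_append, List.cons.injEq] at he
        obtain ⟨h2, h3⟩ := he
        subst h1 h2 h3
        refine ⟨(u ++ [c]) ++ (v' ++ w), ⟨u ++ [c], v', w, x,
          fun d hd => hv d (List.mem_cons_of_mem _ hd), by simp, rfl⟩, by simp⟩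
    · simp only [List.cons_append, List.cons.injEq] at he
      obtain ⟨h1, he⟩ := he
      subst h1
      rcases List.append_eq_append_iff.mp he with ⟨f, he', hf⟩ | ⟨f, hv', hf⟩
      ·
        subst he'
        rcases f with _ | ⟨y₁, f⟩
        · simp only [List.nil_append, List.cons.injEq] at hf
          obtain ⟨h2, h3⟩ := hf
          subst h2 h3
          refine ⟨u ++ ((v ++ [b]) ++ q), ⟨u, v ++ [b], q, x, ?_, by simp, rfl⟩, by simp⟩
          intro c hc
          rcases List.mem_append.mp hc with hc | hc
          · exact hv c hc
          · simp only [List.mem_singleton] at hc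
            subst hc
            simpa using tilde_symm hsymm hab
        · simp only [List.cons_append, List.cons.injEq] at hf
          obtain ⟨h2, h3⟩ := hf
          subst h2 h3
          refine ⟨u ++ (v ++ (f ++ b :: a :: q)), ⟨u, v, f ++ b :: a :: q, x, hv,
            by simp, rfl⟩, ?_⟩
          exact tmk_of_adjSw ⟨u ++ v ++ f, q, a, b, hab, by simp, by simp⟩
      · -- v = e ++ f, a :: b :: q = f ++ x̄ :: w
        subst hv'
        rcases f with _ | ⟨a₁, f⟩
        · simp only [List.nil_append, List.cons.injEq] at hf
          obtain ⟨h2, h3⟩ := hf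
          subst h2 h3
          refine ⟨u ++ ((e ++ [b]) ++ q), ⟨u, e ++ [b], q, x, ?_, by simp, rfl⟩, by simp⟩
          intro c hc
          rcases List.mem_append.mp hc with hc | hc
          · exact hv c (by simp [hc])
          · simp only [List.mem_singleton] at hc
            subst hc
            simpa using tilde_symm hsymm hab
        · simp only [List.cons_append, List.cons.injEq] at hf
          obtain ⟨h2, hf⟩ := hf
          rcases f with _ | ⟨b₁, f⟩
          · simp only [List.nil_append, List.cons.injEq] at hf
            obtain ⟨h3, h4⟩ := hf
            subst h2 h3 h4
            refine ⟨u ++ (e ++ a :: q), ⟨u, e, a :: q, x,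
              fun c hc => hv c (by simp [hc]), by simp, rfl⟩, by simp⟩
          · simp only [List.cons_append, List.cons.injEq] at hf
            obtain ⟨h3, h4⟩ := hf
            subst h2 h3 h4
            refine ⟨u ++ ((e ++ b :: a :: f) ++ w), ⟨u, e ++ b :: a :: f, w, x, ?_,
              by simp, rfl⟩, ?_⟩
            · intro c hc
              apply hv c
              simp only [List.mem_append, List.mem_cons] at hc ⊢
              tauto
            · exact tmk_of_adjSw ⟨u ++ e, f ++ w, a, b, hab, by simp, by simp⟩

end Stmt17
namespace Stmt17

open PCM

variable {A : Type*} {θ : A → A → Prop}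

lemma not_tilde_self (hanti : ∀ a, ¬ θ a a) (x : A ⊕ A) : ¬ tilde θ x x := by
  simpa [tilde] using hanti (unbar x)

lemma not_tilde_swap' (hanti : ∀ a, ¬ θ a a) (x : A ⊕ A) : ¬ tilde θ (Sum.swap x) x := by
  simpa [tilde] using hanti (unbar x)

set_option maxHeartbeats 1000000 in
lemma cancP_diamond_aux (hanti : ∀ a, ¬ θ a a) (hsymm : ∀ a b, θ a b → θ b a)
    {u e v₁ w₁ v₂ w₂ : List (A ⊕ A)} {x₁ x₂ : A ⊕ A}
    (hv₁ : ∀ c ∈ v₁, tilde θ c x₁) (hv₂ : ∀ c ∈ v₂, tilde θ c x₂)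
    (he : x₁ :: (v₁ ++ Sum.swap x₁ :: w₁) = e ++ x₂ :: (v₂ ++ Sum.swap x₂ :: w₂)) :
    tmk θ (u ++ (v₁ ++ w₁)) = tmk θ ((u ++ e) ++ (v₂ ++ w₂)) ∨
    ∃ d₁ d₂, CancP θ (u ++ (v₁ ++ w₁)) d₁ ∧ CancP θ ((u ++ e) ++ (v₂ ++ w₂)) d₂ ∧
      tmk θ d₁ = tmk θ d₂ := by
  rcases e with _ | ⟨y, e⟩
  · simp only [List.nil_append, List.cons.injEq] at he
    obtain ⟨h1, he⟩ := he
    subst h1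
    rcases List.append_eq_append_iff.mp he with ⟨f, hf1, hf2⟩ | ⟨f, hf1, hf2⟩
    · subst hf1
      rcases f with _ | ⟨z, f⟩
      · simp only [List.nil_append, List.cons.injEq] at hf2
        obtain ⟨-, h3⟩ := hf2
        subst h3
        exact Or.inl (by simp)
      · simp only [List.cons_append, List.cons.injEq] at hf2
        obtain ⟨h2, -⟩ := hf2
        subst h2
        exact absurd (hv₂ (Sum.swap x₁) (by simp)) (not_tilde_swap' hanti x₁)
    · subst hf1
      rcases f with _ | ⟨z, f⟩
      · simp only [List.nil_append, List.cons.injEq] at hf2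
        obtain ⟨-, h3⟩ := hf2
        subst h3
        exact Or.inl (by simp)
      · simp only [List.cons_append, List.cons.injEq] at hf2
        obtain ⟨h2, -⟩ := hf2
        subst h2
        exact absurd (hv₁ (Sum.swap x₁) (by simp)) (not_tilde_swap' hanti x₁)
  · simp only [List.cons_append, List.cons.injEq] at he
    obtain ⟨h1, he⟩ := he
    subst h1
    rcases List.append_eq_append_iff.mp he with ⟨f, hf1, hf2⟩ | ⟨f, hf1, hf2⟩
    · subst hf1
      rcases f with _ | ⟨z, f⟩
      · simp only [List.nil_append, List.cons.injEq] at hf2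
        obtain ⟨h2, h3⟩ := hf2
        subst h2 h3
        refine Or.inl ?_
        have hcom : ∀ c ∈ v₁ ++ v₂, tilde θ c x₁ := by
          intro c hc
          rcases List.mem_append.mp hc with hc | hc
          · exact hv₁ c hc
          · simpa using hv₂ c hc
        have hb := tmk_block' hsymm hcom u w₂
        rw [show u ++ (v₁ ++ (v₂ ++ (Sum.swap (Sum.swap x₁)) :: w₂))
              = u ++ ((v₁ ++ v₂) ++ x₁ :: w₂) from by simp,
          show u ++ x₁ :: (v₁ ++ []) ++ (v₂ ++ w₂) = u ++ x₁ :: ((v₁ ++ v₂) ++ w₂) from by simp]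
        exact hb.symm
      · simp only [List.cons_append, List.cons.injEq] at hf2
        obtain ⟨h2, h3⟩ := hf2
        subst h2 h3
        exact Or.inr ⟨(u ++ v₁ ++ f) ++ (v₂ ++ w₂), u ++ (v₁ ++ (f ++ (v₂ ++ w₂))),
          ⟨u ++ v₁ ++ f, v₂, w₂, x₂, hv₂, by simp, rfl⟩,
          ⟨u, v₁, f ++ (v₂ ++ w₂), x₁, hv₁, by simp, rfl⟩, by simp⟩
    · subst hf1
      rcases f with _ | ⟨z, f⟩
      · simp only [List.nil_append, List.cons.injEq] at hf2
        obtain ⟨h2, h3⟩ := hf2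
        subst h2 h3
        refine Or.inl ?_
        have hcom : ∀ c ∈ e ++ v₂, tilde θ c x₁ := by
          intro c hc
          rcases List.mem_append.mp hc with hc | hc
          · exact hv₁ c (by simp [hc])
          · simpa using hv₂ c hc
        have hb := tmk_block' hsymm hcom u w₂
        rw [show u ++ (e ++ [] ++ (v₂ ++ (Sum.swap (Sum.swap x₁)) :: w₂))
              = u ++ ((e ++ v₂) ++ x₁ :: w₂) from by simp,
          show u ++ x₁ :: e ++ (v₂ ++ w₂) = u ++ x₁ :: ((e ++ v₂) ++ w₂) from by simp]
        exact hb.symm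
      · simp only [List.cons_append, List.cons.injEq] at hf2
        obtain ⟨h2, hf2⟩ := hf2
        subst h2
        rcases List.append_eq_append_iff.mp hf2 with ⟨g, hg1, hg2⟩ | ⟨g, hg1, hg2⟩
        · subst hg1
          rcases g with _ | ⟨z', g⟩
          · simp only [List.nil_append, List.cons.injEq] at hg2
            obtain ⟨h4, -⟩ := hg2
            have h5 : x₂ = x₁ := by
              have := congrArg Sum.swap h4
              simpa [Sum.swap_swap] using this
            have hcontra : tilde θ x₂ x₁ := hv₁ x₂ (by simp)
            rw [h5] at hcontra
            exact absurd hcontra (not_tilde_self hanti x₁)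
          · simp only [List.cons_append, List.cons.injEq] at hg2
            obtain ⟨h4, h5⟩ := hg2
            subst h4 h5
            refine Or.inr ⟨(u ++ e) ++ (v₂ ++ (g ++ w₁)), u ++ ((e ++ v₂ ++ g) ++ w₁),
              ⟨u ++ e, v₂, g ++ w₁, x₂, hv₂, by simp, rfl⟩,
              ⟨u, e ++ v₂ ++ g, w₁, x₁, ?_, by simp, rfl⟩, by simp⟩
            intro c hc
            apply hv₁ c
            simp only [List.mem_append, List.mem_cons] at hc ⊢
            tauto
        · subst hg1
          rcases g with _ | ⟨z', g⟩
          · simp only [List.nil_append, List.cons.injEq] at hg2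
            obtain ⟨h4, -⟩ := hg2
            have h5 : x₁ = x₂ := by
              have := congrArg Sum.swap h4
              simpa [Sum.swap_swap] using this
            have hcontra : tilde θ x₂ x₁ := hv₁ x₂ (by simp)
            rw [← h5] at hcontra
            exact absurd hcontra (not_tilde_self hanti x₁)
          · simp only [List.cons_append, List.cons.injEq] at hg2
            obtain ⟨h4, h5⟩ := hg2
            subst h4 h5
            refine Or.inr ⟨(u ++ e) ++ ((f ++ g) ++ w₂), u ++ ((e ++ f) ++ (g ++ w₂)),
              ⟨u ++ e, f ++ g, w₂, x₂, ?_, by simp, rfl⟩,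
              ⟨u, e ++ f, g ++ w₂, x₁, ?_, by simp, rfl⟩, by simp⟩
            · intro c hc
              apply hv₂ c
              simp only [List.mem_append, List.mem_cons] at hc ⊢
              tauto
            · intro c hc
              apply hv₁ c
              simp only [List.mem_append, List.mem_cons] at hc ⊢
              tauto

end Stmt17
namespace Stmt17

open PCM

variable {A : Type*} {θ : A → A → Prop}

lemma cancP_diamond (hanti : ∀ a, ¬ θ a a) (hsymm : ∀ a b, θ a b → θ b a)
    {m r₁ r₂ : List (A ⊕ A)} (h₁ : CancP θ m r₁) (h₂ : CancP θ m r₂) :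
    tmk θ r₁ = tmk θ r₂ ∨
    ∃ d₁ d₂, CancP θ r₁ d₁ ∧ CancP θ r₂ d₂ ∧ tmk θ d₁ = tmk θ d₂ := by
  obtain ⟨u₁, v₁, w₁, x₁, hv₁, hm₁, rfl⟩ := h₁
  obtain ⟨u₂, v₂, w₂, x₂, hv₂, hm₂, rfl⟩ := h₂
  have heq : u₁ ++ x₁ :: (v₁ ++ Sum.swap x₁ :: w₁)
      = u₂ ++ x₂ :: (v₂ ++ Sum.swap x₂ :: w₂) := by rw [← hm₁, ← hm₂]
  rcases List.append_eq_append_iff.mp heq with ⟨e, hu, he⟩ | ⟨e, hu, he⟩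
  · subst hu
    exact cancP_diamond_aux hanti hsymm hv₁ hv₂ he
  · subst hu
    rcases cancP_diamond_aux hanti hsymm hv₂ hv₁ he with h | ⟨d₂, d₁, hc2, hc1, hd⟩
    · exact Or.inl h.symm
    · exact Or.inr ⟨d₁, d₂, hc1, hc2, hd.symm⟩

lemma cancP_transfer_aux (hanti : ∀ a, ¬ θ a a) (hsymm : ∀ a b, θ a b → θ b a)
    {m m' : List (A ⊕ A)} (hch : Relation.EqvGen (AdjSw θ) m m') :
    (∀ l₁, CancP θ m l₁ → ∃ l₂, CancP θ m' l₂ ∧ tmk θ l₁ = tmk θ l₂) ∧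
    (∀ l₁, CancP θ m' l₁ → ∃ l₂, CancP θ m l₂ ∧ tmk θ l₁ = tmk θ l₂) := by
  induction hch with
  | rel x y hxy =>
    exact ⟨fun l₁ hc => cancP_transfer_adjSw hanti hsymm hxy hc,
      fun l₁ hc => cancP_transfer_adjSw hanti hsymm (hxy.symm hsymm) hc⟩
  | refl x => exact ⟨fun l₁ hc => ⟨l₁, hc, rfl⟩, fun l₁ hc => ⟨l₁, hc, rfl⟩⟩
  | symm x y _ ih => exact ⟨ih.2, ih.1⟩
  | trans x y z _ _ ih1 ih2 =>
    constructor
    · intro l₁ hc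
      obtain ⟨l₂, hc2, he2⟩ := ih1.1 l₁ hc
      obtain ⟨l₃, hc3, he3⟩ := ih2.1 l₂ hc2
      exact ⟨l₃, hc3, he2.trans he3⟩
    · intro l₁ hc
      obtain ⟨l₂, hc2, he2⟩ := ih2.2 l₁ hc
      obtain ⟨l₃, hc3, he3⟩ := ih1.2 l₂ hc2
      exact ⟨l₃, hc3, he2.trans he3⟩

lemma cancP_transfer (hanti : ∀ a, ¬ θ a a) (hsymm : ∀ a b, θ a b → θ b a)
    {m m' l₁ : List (A ⊕ A)} (h : tmk θ m = tmk θ m') (hc : CancP θ m l₁) :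
    ∃ l₂, CancP θ m' l₂ ∧ tmk θ l₁ = tmk θ l₂ :=
  (cancP_transfer_aux hanti hsymm (eqvGen_adjSw_of_tmk_eq h)).1 l₁ hc

lemma tstep_strong_confluence (hanti : ∀ a, ¬ θ a a) (hsymm : ∀ a b, θ a b → θ b a) :
    ∀ T T₁ T₂, TStep θ T T₁ → TStep θ T T₂ →
      ∃ d, Relation.ReflGen (TStep θ) T₁ d ∧ Relation.ReflTransGen (TStep θ) T₂ d := by
  rintro T T₁ T₂ ⟨m, l, hm, hl, hc⟩ ⟨m', l', hm', hl', hc'⟩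
  have hmm' : tmk θ m' = tmk θ m := by rw [hm, hm']
  obtain ⟨l'', hc'', he''⟩ := cancP_transfer hanti hsymm hmm' hc'
  rcases cancP_diamond hanti hsymm hc hc'' with h | ⟨d₁, d₂, hd₁, hd₂, hdd⟩
  · refine ⟨T₁, Relation.ReflGen.refl, ?_⟩
    have : T₂ = T₁ := by rw [← hl, ← hl', he'', ← h]
    rw [this]
  · refine ⟨tmk θ d₁, Relation.ReflGen.single ⟨l, d₁, hl, rfl, hd₁⟩, ?_⟩
    exact Relation.ReflTransGen.single ⟨l'', d₂, by rw [← he'', hl'], hdd.symm, hd₂⟩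

lemma tstep_length {T T' : Trace (A ⊕ A) (tilde θ)} (h : TStep θ T T')
    {a b : List (A ⊕ A)} (ha : tmk θ a = T) (hb : tmk θ b = T') :
    b.length + 2 = a.length := by
  obtain ⟨l, l', hl, hl', ⟨u, v, w, x, hv, rfl, rfl⟩⟩ := h
  have h1 : a.length = (u ++ x :: (v ++ Sum.swap x :: w)).length :=
    length_eq_of_tmk_eq (by rw [ha, ← hl])
  have h2 : b.length = (u ++ (v ++ w)).length :=
    length_eq_of_tmk_eq (by rw [hb, ← hl'])
  simp only [List.length_append, List.length_cons] at h1 h2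
  omega

lemma rtg_tstep_length {T T' : Trace (A ⊕ A) (tilde θ)}
    (h : Relation.ReflTransGen (TStep θ) T T') :
    ∀ a b : List (A ⊕ A), tmk θ a = T → tmk θ b = T' → b.length ≤ a.length := by
  induction h with
  | refl =>
    intro a b ha hb
    exact le_of_eq (length_eq_of_tmk_eq (by rw [ha, hb]) ).symm
  | @tail c T' hrt hstep ih =>
    intro a b ha hb
    obtain ⟨lc, lc', hlc, hlc', hcc⟩ := hstep
    have h1 := ih a lc ha hlc
    have h2 := tstep_length (⟨lc, lc', hlc, hlc', hcc⟩ : TStep θ c T') hlc hb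
    omega

lemma s_tmk_pair {s : Trace (A ⊕ A) (tilde θ) →* PCGroup A θ} (hs : IsSection θ s)
    (x : A ⊕ A) : s (tmk θ [x, Sum.swap x]) = 1 := by
  have h : tmk θ [x, Sum.swap x] = trOf (tilde θ) x * trOf (tilde θ) (Sum.swap x) := by
    rw [show [x, Sum.swap x] = [x] ++ [Sum.swap x] from rfl, tmk_append]; rfl
  rw [h, map_mul]
  cases x with
  | inl a =>
    rw [hs.1 a, show Sum.swap (Sum.inl a : A ⊕ A) = Sum.inr a from rfl, hs.2 a,
      mul_inv_cancel]
  | inr a =>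
    rw [hs.2 a, show Sum.swap (Sum.inr a : A ⊕ A) = Sum.inl a from rfl, hs.1 a,
      inv_mul_cancel]

lemma s_eq_of_cancP (hsymm : ∀ a b, θ a b → θ b a)
    {s : Trace (A ⊕ A) (tilde θ) →* PCGroup A θ} (hs : IsSection θ s)
    {l l' : List (A ⊕ A)} (hc : CancP θ l l') :
    s (tmk θ l') = s (tmk θ l) := by
  obtain ⟨u, v, w, x, hv, rfl, rfl⟩ := hc
  have h1 : tmk θ (u ++ x :: (v ++ Sum.swap x :: w))
      = tmk θ (u ++ (v ++ x :: Sum.swap x :: w)) := tmk_block' hsymm hv u (Sum.swap x :: w)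
  rw [h1]
  have e2 : u ++ (v ++ x :: Sum.swap x :: w) = (u ++ v) ++ ([x, Sum.swap x] ++ w) := by simp
  have e3 : u ++ (v ++ w) = (u ++ v) ++ w := by simp
  rw [e2, e3, tmk_append (u ++ v) w, tmk_append (u ++ v) ([x, Sum.swap x] ++ w),
    tmk_append [x, Sum.swap x] w, map_mul, map_mul, map_mul, s_tmk_pair hs x, one_mul]

lemma reduced_of_no_cancP (hanti : ∀ a, ¬ θ a a) (hsymm : ∀ a b, θ a b → θ b a)
    {s : Trace (A ⊕ A) (tilde θ) →* PCGroup A θ} (hs : IsSection θ s)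
    {l : List (A ⊕ A)} (h : ∀ l', ¬ CancP θ l l') :
    ReducedWrt θ s (tmk θ l) := by
  intro t' n n' hst hlen hlen'
  obtain ⟨la, hla, rfl⟩ := hlen
  obtain ⟨lb, hlb, rfl⟩ := hlen'
  have hb : s (tmk θ lb) = s (tmk θ l) := by
    rw [show tmk θ lb = t' from hlb, hst]
  have hg := gcon_of_s_eq hsymm hs hb
  have hEq := eqvGen_tstep_of_step (eqvGen_step_of_gcon hg)
  have hconf := tstep_strong_confluence (θ := θ) hanti hsymm
  have hequiv := Relation.equivalence_join_reflTransGen hconf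
  have key : ∀ X Y, Relation.EqvGen (TStep θ) X Y →
      Relation.Join (Relation.ReflTransGen (TStep θ)) X Y := by
    intro X Y hXY
    induction hXY with
    | rel a b hab => exact ⟨b, Relation.ReflTransGen.single hab, Relation.ReflTransGen.refl⟩
    | refl a => exact hequiv.refl a
    | symm a b _ ih => exact hequiv.symm ih
    | trans a b c _ _ ih1 ih2 => exact hequiv.trans ih1 ih2
  have hjoin := key _ _ hEq
  obtain ⟨d, hbd, hld⟩ := hjoin
  have hdl : d = tmk θ l := by
    rcases Relation.ReflTransGen.cases_head hld with h' | ⟨c, hstep, -⟩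
    · exact h'.symm
    · exfalso
      obtain ⟨m, m', hm, hm', hcm⟩ := hstep
      obtain ⟨l₂, hc₂, -⟩ := cancP_transfer hanti hsymm (show tmk θ m = tmk θ l from hm) hcm
      exact h l₂ hc₂
  have hlen1 : l.length ≤ lb.length := rtg_tstep_length hbd lb l rfl (by rw [hdl])
  have hlen2 : la.length = l.length := length_eq_of_tmk_eq (show tmk θ la = tmk θ l from hla)
  omega

end Stmt17
open PCM in
/-- a trace `t = a₁⋯aₙ` over `Ã` is not reduced iff there are
`i < j` with `a_i = ā_j` and `(a_k, a_i) ∈ θ̃` for all `i < k < j`. -/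
theorem stmt_17 {A : Type*} (θ : A → A → Prop)
    (hanti : ∀ a, ¬ θ a a) (hsymm : ∀ a b, θ a b → θ b a)
    (s : Trace (A ⊕ A) (tilde θ) →* PCGroup A θ) (hs : IsSection θ s)
    (l : List (A ⊕ A)) :
    ¬ ReducedWrt θ s (trMk (tilde θ) (FreeMonoid.ofList l)) ↔
      ∃ i j : Fin l.length, i < j ∧ l.get i = Sum.swap (l.get j) ∧
        ∀ k : Fin l.length, i < k → k < j → tilde θ (l.get k) (l.get i) := by
  rw [← Stmt17.cancP_iff_pair]
  constructor
  · intro hnred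
    by_contra hno
    push_neg at hno
    exact hnred (Stmt17.reduced_of_no_cancP hanti hsymm hs hno)
  · rintro ⟨l', hc⟩ hred
    have hs' : s (Stmt17.tmk θ l') = s (Stmt17.tmk θ l) := Stmt17.s_eq_of_cancP hsymm hs hc
    have h1 : HasLen (tilde θ) (Stmt17.tmk θ l) l.length := ⟨l, rfl, rfl⟩
    have h2 : HasLen (tilde θ) (Stmt17.tmk θ l') l'.length := ⟨l', rfl, rfl⟩
    have hle := hred (Stmt17.tmk θ l') l.length l'.length hs' h1 h2
    obtain ⟨u, v, w, x, hv, hl, hl'⟩ := hc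
    subst hl hl'
    simp only [List.length_append, List.length_cons] at hle
    omega
end

section
/- In the free monoid {a,b,c}* (trace monoid with empty independence relation), consider the bisection B = (a*, ⟨ba* ∪ ca*⟩) and the factorization F = (b*, a*, ⟨ab⁺a* ∪ cb*a*⟩). Then no factor of F is cut by B (i.e. for each factor Y of F, at least one of ⟨a⟩ ∩ ⟨Y⟩ and ⟨ba* ∪ ca*⟩ ∩ ⟨Y⟩ is trivial), yet B is not coarser than F and the two factorizations admit no common refinement; this shows the hypothesis of a common upper bound is necessary in the cutting lemma. -/
namespace PCM

variable {M : Type*} [Monoid M]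

/-- The family `F` is a factorization (in the sense of Schützenberger) of the
submonoid `N` : each element of `N` has a unique strictly decreasing decomposition
into non-identity elements of the factors. -/
def IsFactorizationOf {J : Type*} [LinearOrder J] (F : J → Submonoid M)
    (N : Submonoid M) : Prop :=
  (∀ j, F j ≤ N) ∧
  ∀ m ∈ N, ∃! l : List (J × M),
    List.Chain' (fun p q => q.1 < p.1) l ∧
    (∀ p ∈ l, p.2 ∈ F p.1 ∧ p.2 ≠ 1) ∧
    (l.map Prod.snd).prod = m

/-- A factorization of the whole monoid. -/
def IsFactorization {J : Type*} [LinearOrder J] (F : J → Submonoid M) : Prop :=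
  IsFactorizationOf F ⊤

/-- `F'` refines `F` : the index set of `F'` decomposes as an ordered sum of
intervals (fibers of a monotone map), each yielding a factorization of the
corresponding factor of `F`. -/
def Refines {J J' : Type*} [LinearOrder J] [LinearOrder J']
    (F : J → Submonoid M) (F' : J' → Submonoid M) : Prop :=
  ∃ φ : J' → J, Monotone φ ∧
    ∀ i : J, IsFactorizationOf (fun j : {j : J' // φ j = i} => F' j.1) (F i)

/-- The factor `N` is cut by the bisection `(B₁,B₂)`. -/
def CutBy (B₁ B₂ N : Submonoid M) : Prop := B₁ ⊓ N ≠ ⊥ ∧ B₂ ⊓ N ≠ ⊥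

end PCM

namespace PCM

/-- `a* ⊆ {a,b,c}*` (with `a,b,c = 0,1,2`). -/
def aStar : Submonoid (FreeMonoid (Fin 3)) := Submonoid.closure {FreeMonoid.of 0}

/-- `b* ⊆ {a,b,c}*`. -/
def bStar : Submonoid (FreeMonoid (Fin 3)) := Submonoid.closure {FreeMonoid.of 1}

/-- `⟨ba* ∪ ca*⟩`. -/
def rightB : Submonoid (FreeMonoid (Fin 3)) :=
  Submonoid.closure {w | ∃ n : ℕ, w = FreeMonoid.of 1 * (FreeMonoid.of 0) ^ n ∨
    w = FreeMonoid.of 2 * (FreeMonoid.of 0) ^ n}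

/-- `⟨ab⁺a* ∪ cb*a*⟩`. -/
def rightF : Submonoid (FreeMonoid (Fin 3)) :=
  Submonoid.closure {w | ∃ n m : ℕ,
    w = FreeMonoid.of 0 * (FreeMonoid.of 1) ^ (n + 1) * (FreeMonoid.of 0) ^ m ∨
    w = FreeMonoid.of 2 * (FreeMonoid.of 1) ^ n * (FreeMonoid.of 0) ^ m}

/-- The bisection `B = (a*, ⟨ba* ∪ ca*⟩)` (left factor has the larger index). -/
def Bfam18 : Fin 2 → Submonoid (FreeMonoid (Fin 3)) := ![rightB, aStar]

/-- The factorization `F = (b*, a*, ⟨ab⁺a* ∪ cb*a*⟩)`. -/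
def Ffam18 : Fin 3 → Submonoid (FreeMonoid (Fin 3)) := ![rightF, aStar, bStar]

end PCM

namespace PCM
open FreeMonoid List

/-! ### Auxiliary lemmas for `stmt_18` -/

lemma toList_pow18 (a : Fin 3) (n : ℕ) :
    toList (of a ^ n) = List.replicate n a := by
  induction n with
  | zero => rfl
  | succ n ih => rw [pow_succ, toList_mul, ih, toList_of, List.replicate_succ']

lemma fm_ext18 {x y : FreeMonoid (Fin 3)} (h : toList x = toList y) : x = y :=
  FreeMonoid.toList.injective h

lemma mem_aStar18 {x : FreeMonoid (Fin 3)} (h : x ∈ aStar) :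
    ∃ n, toList x = List.replicate n (0 : Fin 3) := by
  rcases Submonoid.mem_closure_singleton.1 h with ⟨n, rfl⟩
  exact ⟨n, toList_pow18 0 n⟩

lemma mem_bStar18 {x : FreeMonoid (Fin 3)} (h : x ∈ bStar) :
    ∃ n, toList x = List.replicate n (1 : Fin 3) := by
  rcases Submonoid.mem_closure_singleton.1 h with ⟨n, rfl⟩
  exact ⟨n, toList_pow18 1 n⟩

lemma aStar_of_rep18 (n : ℕ) : (FreeMonoid.of (0:Fin 3)) ^ n ∈ aStar :=
  Submonoid.mem_closure_singleton.2 ⟨n, rfl⟩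

lemma bStar_of_rep18 (n : ℕ) : (FreeMonoid.of (1:Fin 3)) ^ n ∈ bStar :=
  Submonoid.mem_closure_singleton.2 ⟨n, rfl⟩

lemma mem_rightB18 {x : FreeMonoid (Fin 3)} (h : x ∈ rightB) :
    x = 1 ∨ ∃ c t, toList x = c :: t ∧ c ≠ 0 := by
  induction h using Submonoid.closure_induction with
  | mem w hw =>
    rcases hw with ⟨n, hw | hw⟩ <;> subst hw <;> right
    · exact ⟨1, List.replicate n 0, by simp [toList_mul, toList_pow18], by decide⟩
    · exact ⟨2, List.replicate n 0, by simp [toList_mul, toList_pow18], by decide⟩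
  | one => exact Or.inl rfl
  | mul a b _ _ ha hb =>
    rcases ha with rfl | ⟨c, t, hct, hc⟩
    · simpa using hb
    · right; exact ⟨c, t ++ toList b, by simp [toList_mul, hct], hc⟩

lemma mem_rightF18 {x : FreeMonoid (Fin 3)} (h : x ∈ rightF) :
    x = 1 ∨ (∃ t, toList x = 0 :: 1 :: t) ∨ (∃ t, toList x = 2 :: t) := by
  induction h using Submonoid.closure_induction with
  | mem w hw =>
    rcases hw with ⟨n, m, hw | hw⟩ <;> subst hw <;> right
    · left
      exact ⟨List.replicate n 1 ++ List.replicate m 0,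
        by simp [toList_mul, toList_pow18, List.replicate_succ]⟩
    · right
      exact ⟨List.replicate n 1 ++ List.replicate m 0,
        by simp [toList_mul, toList_pow18]⟩
  | one => exact Or.inl rfl
  | mul a b _ _ ha hb =>
    rcases ha with rfl | ⟨t, ht⟩ | ⟨t, ht⟩
    · simpa using hb
    · right; left; exact ⟨t ++ toList b, by simp [toList_mul, ht]⟩
    · right; right; exact ⟨t ++ toList b, by simp [toList_mul, ht]⟩

lemma head?_dropWhile18 {p : Fin 3 → Bool} : ∀ {l : List (Fin 3)} {c : Fin 3},
    c ∈ (l.dropWhile p).head? → ¬ p c := by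
  intro l
  induction l with
  | nil => simp
  | cons x t ih =>
    intro c h
    rw [List.dropWhile_cons] at h
    split at h
    · exact ih h
    · simp only [List.head?_cons, Option.mem_some_iff] at h
      subst h; simp_all

lemma takeWhile_eq_replicate18 (c : Fin 3) (l : List (Fin 3)) :
    l.takeWhile (· = c) = List.replicate (l.takeWhile (· = c)).length c := by
  apply List.eq_replicate_of_mem
  intro d hd
  simpa using List.mem_takeWhile_imp hd

lemma rightB_of_list18 (l : List (Fin 3)) (h : ∀ c ∈ l.head?, c ≠ 0) :
    ofList l ∈ rightB := by
  suffices H : ∀ n (l : List (Fin 3)), l.length = n → (∀ c ∈ l.head?, c ≠ 0) →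
      ofList l ∈ rightB from H _ l rfl h
  clear h l
  intro n
  induction n using Nat.strong_induction_on with
  | _ n ih =>
  intro l hn h
  match l, h with
  | [], _ => exact one_mem _
  | c :: t, h =>
    have hc : c ≠ 0 := h c rfl
    set k := (t.takeWhile (· = (0:Fin 3))).length with hk
    have htake : t.takeWhile (· = (0:Fin 3)) = List.replicate k 0 := takeWhile_eq_replicate18 0 t
    set v := t.dropWhile (· = (0:Fin 3)) with hv
    have hsplit : c :: t = (c :: List.replicate k 0) ++ v := by
      simp [← htake, hv, List.takeWhile_append_dropWhile]
    have hgen : ofList (c :: List.replicate k 0) ∈ rightB := by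
      apply Submonoid.subset_closure
      refine ⟨k, ?_⟩
      have hcl : ofList (c :: List.replicate k 0) = of c * of 0 ^ k := by
        apply fm_ext18; simp [toList_mul, toList_pow18]
      fin_cases c
      · exact absurd rfl hc
      · left; rw [hcl]; rfl
      · right; rw [hcl]; rfl
    have hvmem : ofList v ∈ rightB := by
      subst hn
      refine ih v.length ?_ v rfl ?_
      · have : v.length ≤ t.length := hv ▸ (List.dropWhile_sublist _).length_le
        simpa using Nat.lt_succ_of_le this
      · intro d hd
        have := head?_dropWhile18 (p := (· = (0:Fin 3))) (l := t) (hv ▸ hd)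
        simpa using this
    rw [hsplit, FreeMonoid.ofList_append]
    exact mul_mem hgen hvmem

lemma fin3_cases18 {d : Fin 3} (hd : d ≠ 0) : d = 1 ∨ d = 2 := by
  have h1 : d.1 < 3 := d.isLt
  have h0 : d.1 ≠ 0 := fun h => hd (Fin.ext h)
  rcases Nat.lt_or_ge d.1 2 with h | h
  · left; exact Fin.ext (by omega)
  · right; exact Fin.ext (by omega)

lemma rightF_of_list18 (l : List (Fin 3))
    (h : (∃ t, l = 0 :: 1 :: t) ∨ (∃ t, l = 2 :: t)) : ofList l ∈ rightF := by
  suffices H : ∀ n (l : List (Fin 3)), l.length = n →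
      ((∃ t, l = 0 :: 1 :: t) ∨ (∃ t, l = 2 :: t)) → ofList l ∈ rightF from H _ l rfl h
  clear h l
  intro n
  induction n using Nat.strong_induction_on with
  | _ n ih =>
  rintro l hn hl
  obtain ⟨c₀, t, hc₀, rfl⟩ : ∃ c₀ t, ((c₀ = (0:Fin 3) ∧ ∃ t', t = 1 :: t') ∨ c₀ = 2) ∧
      l = c₀ :: t := by
    rcases hl with ⟨t, rfl⟩ | ⟨t, rfl⟩
    · exact ⟨0, 1 :: t, Or.inl ⟨rfl, t, rfl⟩, rfl⟩
    · exact ⟨2, t, Or.inr rfl, rfl⟩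
  obtain ⟨u, hu⟩ : ∃ u, t.dropWhile (· = (1:Fin 3)) = u := ⟨_, rfl⟩
  obtain ⟨p, htake⟩ : ∃ p, t.takeWhile (· = (1:Fin 3)) = List.replicate p 1 :=
    ⟨_, takeWhile_eq_replicate18 1 t⟩
  have htu : t = List.replicate p 1 ++ u := by
    rw [← htake, ← hu, List.takeWhile_append_dropWhile]
  have hu1 : ∀ c ∈ u.head?, c ≠ (1:Fin 3) := by
    intro c hc
    have := head?_dropWhile18 (p := (· = (1:Fin 3))) (hu ▸ hc); simpa using this
  obtain ⟨v, hvdef⟩ : ∃ v, u.dropWhile (· = (0:Fin 3)) = v := ⟨_, rfl⟩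
  obtain ⟨q, htake2⟩ : ∃ q, u.takeWhile (· = (0:Fin 3)) = List.replicate q 0 :=
    ⟨_, takeWhile_eq_replicate18 0 u⟩
  have huv : u = List.replicate q 0 ++ v := by
    rw [← htake2, ← hvdef, List.takeWhile_append_dropWhile]
  have hv0 : ∀ c ∈ v.head?, c ≠ (0:Fin 3) := by
    intro c hc
    have := head?_dropWhile18 (p := (· = (0:Fin 3))) (hvdef ▸ hc); simpa using this
  have hgen : ∀ q', ofList (c₀ :: (List.replicate p 1 ++ List.replicate q' 0)) ∈ rightF := by
    intro q'
    apply Submonoid.subset_closure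
    rcases hc₀ with ⟨rfl, t', rfl⟩ | rfl
    · have hp1 : 1 ≤ p := by
        by_contra hp0
        interval_cases p
        · simp at htake
      obtain ⟨p₀, rfl⟩ : ∃ p₀, p = p₀ + 1 := ⟨p - 1, by omega⟩
      refine ⟨p₀, q', Or.inl ?_⟩
      apply fm_ext18
      simp [toList_mul, toList_pow18, List.replicate_succ]
    · refine ⟨p, q', Or.inr ?_⟩
      apply fm_ext18
      simp [toList_mul, toList_pow18]
  subst hn
  rcases v with _ | ⟨d, v'⟩
  · have hfin : c₀ :: t = c₀ :: (List.replicate p 1 ++ List.replicate q 0) := by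
      rw [htu, huv]; simp
    rw [hfin]; exact hgen q
  · have hd : d ≠ 0 := by simpa using hv0 d rfl
    have hlen : t.length = p + q + (v'.length + 1) := by
      rw [htu, huv]; simp; omega
    rcases fin3_cases18 hd with rfl | rfl
    · have hq : q ≠ 0 := by
        intro h0
        subst h0
        simp at huv
        exact hu1 1 (by rw [huv]; rfl) rfl
      obtain ⟨q₀, rfl⟩ : ∃ q₀, q = q₀ + 1 := ⟨q - 1, by omega⟩
      have hsplit : c₀ :: t
          = (c₀ :: (List.replicate p 1 ++ List.replicate q₀ 0)) ++ (0 :: 1 :: v') := by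
        rw [htu, huv, List.replicate_succ' (n := q₀) (a := (0:Fin 3))]
        simp
      rw [hsplit, FreeMonoid.ofList_append]
      refine mul_mem (hgen q₀) (ih (0 :: 1 :: v').length ?_ _ rfl (Or.inl ⟨v', rfl⟩))
      simp only [List.length_cons]
      omega
    · have hsplit : c₀ :: t
          = (c₀ :: (List.replicate p 1 ++ List.replicate q 0)) ++ (2 :: v') := by
        rw [htu, huv]; simp
      rw [hsplit, FreeMonoid.ofList_append]
      refine mul_mem (hgen q) (ih (2 :: v').length ?_ _ rfl (Or.inr ⟨v', rfl⟩))
      simp only [List.length_cons]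
      omega

lemma rep_append_inj18 {α : Type*} (c : α) :
    ∀ (k k' : ℕ) (s s' : List α), List.replicate k c ++ s = List.replicate k' c ++ s' →
    (∀ d ∈ s.head?, d ≠ c) → (∀ d ∈ s'.head?, d ≠ c) → k = k' ∧ s = s' := by
  intro k
  induction k with
  | zero =>
    intro k' s s' h hs hs'
    cases k' with
    | zero => simpa using h
    | succ k' =>
      exfalso
      simp only [List.replicate_zero, List.nil_append, List.replicate_succ,
        List.cons_append] at h
      subst h
      exact hs c rfl rfl
  | succ k ihk =>
    intro k' s s' h hs hs'
    cases k' with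
    | zero =>
      exfalso
      simp only [List.replicate_zero, List.nil_append, List.replicate_succ,
        List.cons_append] at h
      exact hs' c (by rw [← h]; rfl) rfl
    | succ k' =>
      rw [List.replicate_succ, List.replicate_succ] at h
      simp only [List.cons_append, List.cons.injEq, true_and] at h
      obtain ⟨h1, h2⟩ := ihk k' s s' h hs hs'
      exact ⟨by omega, h2⟩

def zShape18 (zl : List (Fin 3)) : Prop :=
  zl = [] ∨ (∃ t, zl = 0 :: 1 :: t) ∨ (∃ t, zl = 2 :: t)

def rShape18 (rl : List (Fin 3)) : Prop := rl = [] ∨ ∃ c t, rl = c :: t ∧ c ≠ 0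

lemma rShape_head18 {rl : List (Fin 3)} (h : rShape18 rl) : ∀ d ∈ rl.head?, d ≠ (0:Fin 3) := by
  rcases h with rfl | ⟨c, t, rfl, hc⟩
  · simp
  · intro d hd
    simp only [List.head?_cons, Option.mem_some_iff] at hd
    subst hd; exact hc

lemma zShape_head18 {zl : List (Fin 3)} (h : zShape18 zl) : ∀ d ∈ zl.head?, d ≠ (1:Fin 3) := by
  rcases h with rfl | ⟨t, rfl⟩ | ⟨t, rfl⟩ <;> intro d hd <;>
    simp only [List.head?_nil, List.head?_cons, Option.mem_some_iff] at hd <;>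
    first | exact absurd hd (by simp)
          | (subst hd; decide)

lemma rep0_zShape_head18 (n : ℕ) {zl : List (Fin 3)} (h : zShape18 zl) :
    ∀ d ∈ (List.replicate n (0:Fin 3) ++ zl).head?, d ≠ (1:Fin 3) := by
  cases n with
  | zero => simpa using zShape_head18 h
  | succ n =>
    intro d hd
    rw [List.replicate_succ, List.cons_append, List.head?_cons] at hd
    simp only [Option.mem_some_iff] at hd
    subst hd; decide

lemma an_z_aux18 {n n' : ℕ} {zl zl' : List (Fin 3)} (hz : zShape18 zl) (hz' : zShape18 zl')
    (hle : n ≤ n')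
    (h : List.replicate n 0 ++ zl = List.replicate n' 0 ++ zl') : n = n' ∧ zl = zl' := by
  have hrep : List.replicate n' (0:Fin 3) = List.replicate n 0 ++ List.replicate (n' - n) 0 := by
    rw [← List.replicate_add]; congr 1; omega
  rw [hrep, List.append_assoc] at h
  have h2 : zl = List.replicate (n' - n) 0 ++ zl' := List.append_cancel_left h
  rcases e : n' - n with _ | e'
  · have hnn : n = n' := by omega
    rw [e] at h2
    simp only [List.replicate_zero, List.nil_append] at h2
    exact ⟨hnn, h2⟩
  · exfalso
    rw [e, List.replicate_succ, List.cons_append] at h2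
    rcases hz with rfl | ⟨t, ht⟩ | ⟨t, ht⟩
    · simp at h2
    · rw [ht] at h2
      simp only [List.cons.injEq] at h2
      obtain ⟨h0, h1⟩ := h2
      cases e' with
      | zero =>
        simp only [List.replicate_zero, List.nil_append] at h1
        rcases hz' with rfl | ⟨t', rfl⟩ | ⟨t', rfl⟩
        · simp at h1
        · simp only [List.cons.injEq] at h1; exact absurd h1.1 (by decide)
        · simp only [List.cons.injEq] at h1; exact absurd h1.1 (by decide)
      | succ e'' =>
        rw [List.replicate_succ, List.cons_append] at h1
        simp only [List.cons.injEq] at h1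
        exact absurd h1.1 (by decide)
    · rw [ht] at h2
      simp only [List.cons.injEq] at h2
      exact absurd h2.1 (by decide)

lemma rShape_of_mem18 {r : FreeMonoid (Fin 3)} (hr : r ∈ rightB) : rShape18 (toList r) := by
  rcases mem_rightB18 hr with rfl | ⟨c, t, hct, hc⟩
  · left; rfl
  · right; exact ⟨c, t, hct, hc⟩

lemma zShape_of_mem18 {z : FreeMonoid (Fin 3)} (hz : z ∈ rightF) : zShape18 (toList z) := by
  rcases mem_rightF18 hz with rfl | ⟨t, ht⟩ | ⟨t, ht⟩
  · left; rfl
  · right; left; exact ⟨t, ht⟩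
  · right; right; exact ⟨t, ht⟩

lemma pairB_unique18 {y r y' r' : FreeMonoid (Fin 3)} (hy : y ∈ aStar) (hr : r ∈ rightB)
    (hy' : y' ∈ aStar) (hr' : r' ∈ rightB) (h : y * r = y' * r') : y = y' ∧ r = r' := by
  obtain ⟨n, hn⟩ := mem_aStar18 hy
  obtain ⟨n', hn'⟩ := mem_aStar18 hy'
  have hh : List.replicate n 0 ++ toList r = List.replicate n' 0 ++ toList r' := by
    have := congrArg toList h
    rwa [toList_mul, toList_mul, hn, hn'] at this
  obtain ⟨h1, h2⟩ := rep_append_inj18 0 n n' _ _ hh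
    (rShape_head18 (rShape_of_mem18 hr)) (rShape_head18 (rShape_of_mem18 hr'))
  exact ⟨fm_ext18 (by rw [hn, hn', h1]), fm_ext18 h2⟩

lemma tripleF_unique18 {x y z x' y' z' : FreeMonoid (Fin 3)}
    (hx : x ∈ bStar) (hy : y ∈ aStar) (hz : z ∈ rightF)
    (hx' : x' ∈ bStar) (hy' : y' ∈ aStar) (hz' : z' ∈ rightF)
    (h : x * y * z = x' * y' * z') : x = x' ∧ y = y' ∧ z = z' := by
  obtain ⟨k, hk⟩ := mem_bStar18 hx
  obtain ⟨k', hk'⟩ := mem_bStar18 hx'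
  obtain ⟨n, hn⟩ := mem_aStar18 hy
  obtain ⟨n', hn'⟩ := mem_aStar18 hy'
  have hzs := zShape_of_mem18 hz
  have hzs' := zShape_of_mem18 hz'
  have hh : List.replicate k 1 ++ (List.replicate n 0 ++ toList z)
      = List.replicate k' 1 ++ (List.replicate n' 0 ++ toList z') := by
    have := congrArg toList h
    rwa [toList_mul, toList_mul, toList_mul, toList_mul, hk, hk', hn, hn',
      List.append_assoc, List.append_assoc] at this
  obtain ⟨h1, h2⟩ := rep_append_inj18 1 k k' _ _ hh
    (rep0_zShape_head18 n hzs) (rep0_zShape_head18 n' hzs')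
  have h3 : n = n' ∧ toList z = toList z' := by
    rcases Nat.le_total n n' with hle | hle
    · exact an_z_aux18 hzs hzs' hle h2
    · obtain ⟨e1, e2⟩ := an_z_aux18 hzs' hzs hle h2.symm
      exact ⟨e1.symm, e2.symm⟩
  refine ⟨fm_ext18 ?_, fm_ext18 ?_, fm_ext18 h3.2⟩
  · rw [hk, hk', h1]
  · rw [hn, hn', h3.1]

open scoped Classical in
noncomputable def shapeB18 (y r : FreeMonoid (Fin 3)) : List (Fin 2 × FreeMonoid (Fin 3)) :=
  (if y = 1 then [] else [((1:Fin 2), y)]) ++ (if r = 1 then [] else [((0:Fin 2), r)])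

open scoped Classical in
noncomputable def shapeF18 (x y z : FreeMonoid (Fin 3)) : List (Fin 3 × FreeMonoid (Fin 3)) :=
  (if x = 1 then [] else [((2:Fin 3), x)]) ++ (if y = 1 then [] else [((1:Fin 3), y)])
    ++ (if z = 1 then [] else [((0:Fin 3), z)])

lemma shapeB_chain18 (y r : FreeMonoid (Fin 3)) :
    List.Chain' (fun p q => q.1 < p.1) (shapeB18 y r) := by
  unfold shapeB18; split_ifs <;> simp [List.Chain']

lemma shapeF_chain18 (x y z : FreeMonoid (Fin 3)) :
    List.Chain' (fun p q => q.1 < p.1) (shapeF18 x y z) := by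
  unfold shapeF18; split_ifs <;> simp [List.Chain']

lemma shapeB_prod18 (y r : FreeMonoid (Fin 3)) :
    ((shapeB18 y r).map Prod.snd).prod = y * r := by
  unfold shapeB18; split_ifs <;> simp_all

lemma shapeF_prod18 (x y z : FreeMonoid (Fin 3)) :
    ((shapeF18 x y z).map Prod.snd).prod = x * y * z := by
  unfold shapeF18; split_ifs <;> simp_all [mul_assoc]

lemma shapeB_mem18 {y r : FreeMonoid (Fin 3)} (hy : y ∈ aStar) (hr : r ∈ rightB) :
    ∀ p ∈ shapeB18 y r, p.2 ∈ Bfam18 p.1 ∧ p.2 ≠ 1 := by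
  unfold shapeB18
  split_ifs with h1 h2 <;> intro p hp <;> simp_all <;>
    rcases hp with rfl | rfl <;> simp_all [Bfam18]

lemma shapeF_mem18 {x y z : FreeMonoid (Fin 3)} (hx : x ∈ bStar) (hy : y ∈ aStar)
    (hz : z ∈ rightF) : ∀ p ∈ shapeF18 x y z, p.2 ∈ Ffam18 p.1 ∧ p.2 ≠ 1 := by
  unfold shapeF18
  split_ifs <;> intro p hp <;> simp_all <;>
    rcases hp with rfl | rfl | rfl <;> simp_all [Ffam18]

lemma valid_shapeB18 (l : List (Fin 2 × FreeMonoid (Fin 3)))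
    (hc : List.Chain' (fun p q => q.1 < p.1) l)
    (hm : ∀ p ∈ l, p.2 ∈ Bfam18 p.1 ∧ p.2 ≠ 1) :
    ∃ y r, y ∈ aStar ∧ r ∈ rightB ∧ (l.map Prod.snd).prod = y * r ∧ l = shapeB18 y r := by
  match l with
  | [] => exact ⟨1, 1, one_mem _, one_mem _, by simp, by simp [shapeB18]⟩
  | [(i, v)] =>
    obtain ⟨hv, hv1⟩ := hm (i, v) (by simp)
    fin_cases i
    · refine ⟨1, v, one_mem _, ?_, by simp, by simp [shapeB18, hv1]⟩
      simpa [Bfam18] using hv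
    · refine ⟨v, 1, ?_, one_mem _, by simp, by simp [shapeB18, hv1]⟩
      simpa [Bfam18] using hv
  | [(i, v), (j, w)] =>
    obtain ⟨hv, hv1⟩ := hm (i, v) (by simp)
    obtain ⟨hw, hw1⟩ := hm (j, w) (by simp)
    have hji : j < i := (List.isChain_cons_cons.1 hc).1
    have hi : i = 1 := by omega
    have hj : j = 0 := by omega
    subst hi hj
    refine ⟨v, w, by simpa [Bfam18] using hv, by simpa [Bfam18] using hw, by simp,
      by simp [shapeB18, hv1, hw1]⟩
  | (i, v) :: (j, w) :: (k, u) :: l' =>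
    exfalso
    have h1 : j < i := (List.isChain_cons_cons.1 hc).1
    have h2 : k < j := (List.isChain_cons_cons.1 (List.isChain_cons_cons.1 hc).2).1
    omega

lemma valid_shapeF18 (l : List (Fin 3 × FreeMonoid (Fin 3)))
    (hc : List.Chain' (fun p q => q.1 < p.1) l)
    (hm : ∀ p ∈ l, p.2 ∈ Ffam18 p.1 ∧ p.2 ≠ 1) :
    ∃ x y z, x ∈ bStar ∧ y ∈ aStar ∧ z ∈ rightF ∧
      (l.map Prod.snd).prod = x * y * z ∧ l = shapeF18 x y z := by
  match l with
  | [] => exact ⟨1, 1, 1, one_mem _, one_mem _, one_mem _, by simp, by simp [shapeF18]⟩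
  | [(i, v)] =>
    obtain ⟨hv, hv1⟩ := hm (i, v) (by simp)
    fin_cases i
    · exact ⟨1, 1, v, one_mem _, one_mem _, by simpa [Ffam18] using hv, by simp,
        by simp [shapeF18, hv1]⟩
    · exact ⟨1, v, 1, one_mem _, by simpa [Ffam18] using hv, one_mem _, by simp,
        by simp [shapeF18, hv1]⟩
    · exact ⟨v, 1, 1, by simpa [Ffam18] using hv, one_mem _, one_mem _, by simp,
        by simp [shapeF18, hv1]⟩
  | [(i, v), (j, w)] =>
    obtain ⟨hv, hv1⟩ := hm (i, v) (by simp)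
    obtain ⟨hw, hw1⟩ := hm (j, w) (by simp)
    have hji : j < i := (List.isChain_cons_cons.1 hc).1
    have hcases : (i = 1 ∧ j = 0) ∨ (i = 2 ∧ j = 0) ∨ (i = 2 ∧ j = 1) := by omega
    rcases hcases with ⟨hi, hj⟩ | ⟨hi, hj⟩ | ⟨hi, hj⟩ <;> subst hi hj
    · exact ⟨1, v, w, one_mem _, by simpa [Ffam18] using hv, by simpa [Ffam18] using hw,
        by simp, by simp [shapeF18, hv1, hw1]⟩
    · exact ⟨v, 1, w, by simpa [Ffam18] using hv, one_mem _, by simpa [Ffam18] using hw,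
        by simp, by simp [shapeF18, hv1, hw1]⟩
    · exact ⟨v, w, 1, by simpa [Ffam18] using hv, by simpa [Ffam18] using hw, one_mem _,
        by simp, by simp [shapeF18, hv1, hw1]⟩
  | [(i, v), (j, w), (k, u)] =>
    obtain ⟨hv, hv1⟩ := hm (i, v) (by simp)
    obtain ⟨hw, hw1⟩ := hm (j, w) (by simp)
    obtain ⟨hu, hu1⟩ := hm (k, u) (by simp)
    have h1 : j < i := (List.isChain_cons_cons.1 hc).1
    have h2 : k < j := (List.isChain_cons_cons.1 (List.isChain_cons_cons.1 hc).2).1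
    have hi : i = 2 := by omega
    have hj : j = 1 := by omega
    have hk : k = 0 := by omega
    subst hi hj hk
    exact ⟨v, w, u, by simpa [Ffam18] using hv, by simpa [Ffam18] using hw,
      by simpa [Ffam18] using hu, by simp [mul_assoc], by simp [shapeF18, hv1, hw1, hu1]⟩
  | (i, v) :: (j, w) :: (k, u) :: (r, s) :: l' =>
    exfalso
    have h1 : j < i := (List.isChain_cons_cons.1 hc).1
    have h2 : k < j := (List.isChain_cons_cons.1 (List.isChain_cons_cons.1 hc).2).1
    have h3 : r < k := (List.isChain_cons_cons.1 (List.isChain_cons_cons.1 (List.isChain_cons_cons.1 hc).2).2).1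
    omega

lemma isFactB18 : IsFactorization Bfam18 := by
  refine ⟨fun j => le_top, fun m _ => ?_⟩
  obtain ⟨rest, hrest⟩ : ∃ r, (toList m).dropWhile (· = (0:Fin 3)) = r := ⟨_, rfl⟩
  obtain ⟨n, htake⟩ : ∃ n, (toList m).takeWhile (· = (0:Fin 3)) = List.replicate n 0 :=
    ⟨_, takeWhile_eq_replicate18 0 _⟩
  have hm : toList m = List.replicate n 0 ++ rest := by
    rw [← htake, ← hrest, List.takeWhile_append_dropWhile]
  have hrhead : ∀ c ∈ rest.head?, c ≠ (0:Fin 3) := by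
    intro c hc
    have := head?_dropWhile18 (p := (· = (0:Fin 3))) (hrest ▸ hc); simpa using this
  have hy : (of (0:Fin 3)) ^ n ∈ aStar := aStar_of_rep18 n
  have hr : ofList rest ∈ rightB := rightB_of_list18 rest hrhead
  have hmyr : m = (of (0:Fin 3)) ^ n * ofList rest := by
    apply fm_ext18
    rw [toList_mul, toList_pow18, hm, toList_ofList]
  refine ⟨shapeB18 ((of (0:Fin 3)) ^ n) (ofList rest),
    ⟨shapeB_chain18 _ _, shapeB_mem18 hy hr, by rw [shapeB_prod18, ← hmyr]⟩, ?_⟩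
  rintro l' ⟨hc', hm', hp'⟩
  obtain ⟨y', r', hy', hr', hprod, rfl⟩ := valid_shapeB18 l' hc' hm'
  obtain ⟨e1, e2⟩ := pairB_unique18 hy' hr' hy hr (by rw [← hprod, hp', hmyr])
  rw [e1, e2]

lemma isFactF18 : IsFactorization Ffam18 := by
  refine ⟨fun j => le_top, fun m _ => ?_⟩
  obtain ⟨u, hu⟩ : ∃ u, (toList m).dropWhile (· = (1:Fin 3)) = u := ⟨_, rfl⟩
  obtain ⟨k, htk⟩ : ∃ k, (toList m).takeWhile (· = (1:Fin 3)) = List.replicate k 1 :=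
    ⟨_, takeWhile_eq_replicate18 1 _⟩
  have hm1 : toList m = List.replicate k 1 ++ u := by
    rw [← htk, ← hu, List.takeWhile_append_dropWhile]
  have hu1 : ∀ c ∈ u.head?, c ≠ (1:Fin 3) := by
    intro c hc
    have := head?_dropWhile18 (p := (· = (1:Fin 3))) (hu ▸ hc); simpa using this
  obtain ⟨v, hv⟩ : ∃ v, u.dropWhile (· = (0:Fin 3)) = v := ⟨_, rfl⟩
  obtain ⟨q, htq⟩ : ∃ q, u.takeWhile (· = (0:Fin 3)) = List.replicate q 0 :=
    ⟨_, takeWhile_eq_replicate18 0 u⟩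
  have hm2 : u = List.replicate q 0 ++ v := by
    rw [← htq, ← hv, List.takeWhile_append_dropWhile]
  have hv0 : ∀ c ∈ v.head?, c ≠ (0:Fin 3) := by
    intro c hc
    have := head?_dropWhile18 (p := (· = (0:Fin 3))) (hv ▸ hc); simpa using this
  obtain ⟨n, z, hz, hsplit⟩ : ∃ (n : ℕ) (z : FreeMonoid (Fin 3)), z ∈ rightF ∧
      List.replicate q (0:Fin 3) ++ v = List.replicate n 0 ++ toList z := by
    rcases v with _ | ⟨d, v'⟩
    · exact ⟨q, 1, one_mem _, by simp⟩
    · have hd : d ≠ 0 := by simpa using hv0 d rfl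
      rcases fin3_cases18 hd with rfl | rfl
      · have hq : q ≠ 0 := by
          intro h0
          subst h0
          simp at hm2
          exact hu1 1 (by rw [hm2]; rfl) rfl
        obtain ⟨q₀, rfl⟩ : ∃ q₀, q = q₀ + 1 := ⟨q - 1, by omega⟩
        refine ⟨q₀, ofList (0 :: 1 :: v'), rightF_of_list18 _ (Or.inl ⟨v', rfl⟩), ?_⟩
        rw [toList_ofList, List.replicate_succ' (n := q₀) (a := (0:Fin 3))]
        simp
      · exact ⟨q, ofList (2 :: v'), rightF_of_list18 _ (Or.inr ⟨v', rfl⟩),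
          by rw [toList_ofList]⟩
  have hx : (of (1:Fin 3)) ^ k ∈ bStar := bStar_of_rep18 k
  have hy : (of (0:Fin 3)) ^ n ∈ aStar := aStar_of_rep18 n
  have hmxyz : m = (of (1:Fin 3)) ^ k * (of (0:Fin 3)) ^ n * z := by
    apply fm_ext18
    rw [toList_mul, toList_mul, toList_pow18, toList_pow18, hm1, hm2, hsplit,
      List.append_assoc]
  refine ⟨shapeF18 ((of (1:Fin 3)) ^ k) ((of (0:Fin 3)) ^ n) z,
    ⟨shapeF_chain18 _ _ _, shapeF_mem18 hx hy hz, by rw [shapeF_prod18, ← hmxyz]⟩, ?_⟩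
  rintro l' ⟨hc', hm', hp'⟩
  obtain ⟨x', y', z', hx', hy', hz', hprod, rfl⟩ := valid_shapeF18 l' hc' hm'
  obtain ⟨e1, e2, e3⟩ := tripleF_unique18 hx' hy' hz' hx hy hz (by rw [← hprod, hp', hmxyz])
  rw [e1, e2, e3]

lemma aStar_inf_rightF18 : aStar ⊓ rightF = ⊥ := by
  rw [Submonoid.eq_bot_iff_forall]
  rintro x hx
  obtain ⟨hxa, hxf⟩ := Submonoid.mem_inf.1 hx
  obtain ⟨n, hn⟩ := mem_aStar18 hxa
  rcases mem_rightF18 hxf with rfl | ⟨t, ht⟩ | ⟨t, ht⟩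
  · rfl
  · exfalso
    rw [hn] at ht
    rcases n with _ | _ | n <;> simp [List.replicate_succ, Fin.ext_iff] at ht
  · exfalso
    rw [hn] at ht
    rcases n with _ | n <;> simp [List.replicate_succ, Fin.ext_iff] at ht

lemma rightB_inf_aStar18 : rightB ⊓ aStar = ⊥ := by
  rw [Submonoid.eq_bot_iff_forall]
  rintro x hx
  obtain ⟨hxr, hxa⟩ := Submonoid.mem_inf.1 hx
  obtain ⟨n, hn⟩ := mem_aStar18 hxa
  rcases mem_rightB18 hxr with rfl | ⟨c, t, hct, hc⟩
  · rfl
  · exfalso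
    rw [hn] at hct
    rcases n with _ | n
    · simp at hct
    · rw [List.replicate_succ] at hct
      simp only [List.cons.injEq] at hct
      exact hc hct.1.symm

lemma aStar_inf_bStar18 : aStar ⊓ bStar = ⊥ := by
  rw [Submonoid.eq_bot_iff_forall]
  rintro x hx
  obtain ⟨hxa, hxb⟩ := Submonoid.mem_inf.1 hx
  obtain ⟨n, hn⟩ := mem_aStar18 hxa
  obtain ⟨p, hp⟩ := mem_bStar18 hxb
  rcases n with _ | n
  · apply fm_ext18; rw [hn]; rfl
  · exfalso
    rw [hn] at hp
    rcases p with _ | p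
    · simp at hp
    · rw [List.replicate_succ, List.replicate_succ] at hp
      simp only [List.cons.injEq] at hp
      exact absurd hp.1 (by decide)

lemma of_ne_one18 (c : Fin 3) : FreeMonoid.of c ≠ 1 := by
  intro h
  have := congrArg toList h
  simp at this

lemma b_not_in_aStar18 : FreeMonoid.of (1:Fin 3) ∉ aStar := by
  intro h
  obtain ⟨n, hn⟩ := mem_aStar18 h
  rcases n with _ | n
  · simp at hn
  · rw [List.replicate_succ] at hn
    simp only [toList_of, List.cons.injEq] at hn
    exact absurd hn.1 (by decide)

lemma b_mem_rightB18 : FreeMonoid.of (1:Fin 3) ∈ rightB :=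
  Submonoid.subset_closure ⟨0, Or.inl (by rw [pow_zero, mul_one])⟩

lemma ab_mem_rightF18 : FreeMonoid.of (0:Fin 3) * FreeMonoid.of 1 ∈ rightF :=
  Submonoid.subset_closure ⟨0, 0, Or.inl (by rw [pow_zero, mul_one, pow_one])⟩

lemma a_mem_aStar18 : FreeMonoid.of (0:Fin 3) ∈ aStar :=
  Submonoid.mem_closure_singleton.2 ⟨1, pow_one _⟩

lemma decomp_of_refines18 {M : Type*} [Monoid M] {J J' : Type*} [LinearOrder J]
    [LinearOrder J'] {F : J → Submonoid M} {G : J' → Submonoid M} (φ : J' → J)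
    (hfac : ∀ i, IsFactorizationOf (fun j : {j : J' // φ j = i} => G j.1) (F i))
    {i : J} {m : M} (hm : m ∈ F i) :
    ∃ l : List (J' × M), List.Chain' (fun p q => q.1 < p.1) l ∧
      (∀ p ∈ l, φ p.1 = i ∧ p.2 ∈ G p.1 ∧ p.2 ≠ 1) ∧ (l.map Prod.snd).prod = m := by
  obtain ⟨l, ⟨hc, hmem, hprod⟩, -⟩ := (hfac i).2 m hm
  refine ⟨l.map (fun p => (p.1.1, p.2)), ?_, ?_, ?_⟩
  · refine List.isChain_map_of_isChain _ ?_ hc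
    rintro ⟨a, va⟩ ⟨b, vb⟩ hab
    exact Subtype.coe_lt_coe.2 hab
  · rintro p hp
    simp only [List.mem_map] at hp
    obtain ⟨⟨j, v⟩, hjv, rfl⟩ := hp
    obtain ⟨h1, h2⟩ := hmem (j, v) hjv
    exact ⟨j.2, h1, h2⟩
  · rw [List.map_map, ← hprod]
    rfl

lemma unique_decomp18 {M : Type*} [Monoid M] {J : Type*} [LinearOrder J]
    {G : J → Submonoid M} (hG : IsFactorization G) {m : M} {l l' : List (J × M)}
    (hc : List.Chain' (fun p q => q.1 < p.1) l) (hm : ∀ p ∈ l, p.2 ∈ G p.1 ∧ p.2 ≠ 1)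
    (hp : (l.map Prod.snd).prod = m)
    (hc' : List.Chain' (fun p q => q.1 < p.1) l') (hm' : ∀ p ∈ l', p.2 ∈ G p.1 ∧ p.2 ≠ 1)
    (hp' : (l'.map Prod.snd).prod = m) : l = l' := by
  obtain ⟨l0, -, hu⟩ := hG.2 m (Submonoid.mem_top m)
  rw [hu l ⟨hc, hm, hp⟩, hu l' ⟨hc', hm', hp'⟩]

end PCM

open PCM in
/-- in `{a,b,c}*`, for the bisection `B = (a*, ⟨ba* ∪ ca*⟩)` and the
factorization `F = (b*, a*, ⟨ab⁺a* ∪ cb*a*⟩)`: both are factorizations, no factor of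
`F` is cut by `B`, yet `F` does not refine `B` and the two factorizations admit no
common refinement. -/
theorem stmt_18 :
    IsFactorization Bfam18 ∧
    IsFactorization Ffam18 ∧
    (∀ i : Fin 3, ¬ CutBy aStar rightB (Ffam18 i)) ∧
    ¬ Refines Bfam18 Ffam18 ∧
    ¬ ∃ (J : Type) (_ : LinearOrder J) (G : J → Submonoid (FreeMonoid (Fin 3))),
        IsFactorization G ∧ Refines Bfam18 G ∧ Refines Ffam18 G := by
  refine ⟨isFactB18, isFactF18, ?_, ?_, ?_⟩
  · rintro i ⟨h1, h2⟩
    fin_cases i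
    · exact h1 (by simpa [Ffam18] using aStar_inf_rightF18)
    · exact h2 (by simpa [Ffam18] using rightB_inf_aStar18)
    · exact h1 (by simpa [Ffam18] using aStar_inf_bStar18)
  · rintro ⟨φ, hmono, hfac⟩
    have hb : bStar ≤ Bfam18 (φ 2) := by
      have h := (hfac (φ 2)).1 ⟨2, rfl⟩
      simpa [Ffam18] using h
    have hφ2 : φ 2 = 0 := by
      by_contra h2
      have h1 : φ 2 = 1 := by omega
      rw [h1] at hb
      have hmem : FreeMonoid.of (1:Fin 3) ∈ aStar := by
        have := hb (by simpa [pow_one] using bStar_of_rep18 1)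
        simpa [Bfam18] using this
      exact b_not_in_aStar18 hmem
    have hall : ∀ j, φ j ≠ 1 := by
      intro j
      have := hmono (show j ≤ 2 by omega)
      omega
    obtain ⟨l, ⟨hc, hm, hp⟩, -⟩ := (hfac 1).2 (FreeMonoid.of 0)
      (by simpa [Bfam18] using a_mem_aStar18)
    rcases l with _ | ⟨p, l⟩
    · exact of_ne_one18 0 (by simpa using hp.symm)
    · exact hall p.1.1 p.1.2
  · rintro ⟨J, instJ, G, hG, ⟨φ, hφm, hφ⟩, ⟨ψ, hψm, hψ⟩⟩
    obtain ⟨la, hlac, hlam, hlap⟩ := decomp_of_refines18 φ hφ (i := 1)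
      (show FreeMonoid.of (0:Fin 3) ∈ Bfam18 1 by simpa [Bfam18] using a_mem_aStar18)
    obtain ⟨la2, hla2c, hla2m, hla2p⟩ := decomp_of_refines18 ψ hψ (i := 1)
      (show FreeMonoid.of (0:Fin 3) ∈ Ffam18 1 by simpa [Ffam18] using a_mem_aStar18)
    have hla12 : la = la2 := unique_decomp18 hG hlac (fun p hp => (hlam p hp).2) hlap
        hla2c (fun p hp => (hla2m p hp).2) hla2p
    obtain ⟨lb, hlbc, hlbm, hlbp⟩ := decomp_of_refines18 φ hφ (i := 0)
      (show FreeMonoid.of (1:Fin 3) ∈ Bfam18 0 by simpa [Bfam18] using b_mem_rightB18)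
    obtain ⟨lab, hlabc, hlabm, hlabp⟩ := decomp_of_refines18 ψ hψ (i := 0)
      (show FreeMonoid.of (0:Fin 3) * FreeMonoid.of 1 ∈ Ffam18 0 by
        simpa [Ffam18] using ab_mem_rightF18)
    have hchain : List.Chain' (fun p q => q.1 < p.1) (la ++ lb) := by
      refine List.IsChain.append hlac hlbc ?_
      intro x hx y hy
      have hx1 : φ x.1 = 1 := (hlam x (List.mem_of_mem_getLast? hx)).1
      have hy0 : φ y.1 = 0 := (hlbm y (List.mem_of_mem_head? hy)).1
      by_contra hlt
      have hle : x.1 ≤ y.1 := le_of_not_gt hlt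
      have := hφm hle
      rw [hx1, hy0] at this
      exact absurd this (by decide)
    have heq : la ++ lb = lab := by
      refine unique_decomp18 hG hchain ?_ ?_ hlabc (fun p hp => (hlabm p hp).2) hlabp
      · intro p hp
        rcases List.mem_append.1 hp with h | h
        · exact (hlam p h).2
        · exact (hlbm p h).2
      · rw [List.map_append, List.prod_append, hlap, hlbp]
    have hane : la ≠ [] := by
      intro h
      rw [h] at hlap
      exact of_ne_one18 0 (by simpa using hlap.symm)
    rcases la with _ | ⟨p, la'⟩
    · exact hane rfl
    · have hp_lab : p ∈ lab := heq ▸ List.mem_append_left _ (List.mem_cons_self)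
      have h0 : ψ p.1 = 0 := (hlabm p hp_lab).1
      have h1 : ψ p.1 = 1 := (hla2m p (hla12 ▸ List.mem_cons_self)).1
      rw [h0] at h1
      exact absurd h1 (by decide)
end

section
/- Let B = (B₁, B₂) be a bisection of M(A,θ) and F = (Y_i)_{i∈[1,n]} a factorization with n > 1 such that there exists a factorization G refining both B and F. Then B ⪯ F (F refines B) if and only if no factor Y_i of F is cut by B, i.e. for each i, at least one of ⟨B₁⟩ ∩ ⟨Y_i⟩ and ⟨B₂⟩ ∩ ⟨Y_i⟩ equals {1}. -/
namespace PCM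

variable {M : Type*} [Monoid M]

private lemma chain'_and_mem {α : Type*} {R : α → α → Prop} {P : α → Prop} {l : List α}
    (h : List.Chain' R l) (hP : ∀ a ∈ l, P a) :
    List.Chain' (fun a b => R a b ∧ P a ∧ P b) l := by
  unfold List.Chain' at h ⊢
  rw [List.isChain_iff_getElem] at h ⊢
  intro i hi
  exact ⟨h i hi, hP _ (List.getElem_mem _), hP _ (List.getElem_mem _)⟩

private lemma chain'_pmap {α β : Type*} {R : α → α → Prop} {S : β → β → Prop}
    {P : α → Prop} (f : ∀ a, P a → β) (l : List α) (H : ∀ a ∈ l, P a)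
    (hc : List.Chain' R l)
    (hf : ∀ a ha b hb, R a b → S (f a ha) (f b hb)) :
    List.Chain' S (l.pmap f H) := by
  unfold List.Chain' at hc ⊢
  rw [List.isChain_iff_getElem] at hc ⊢
  intro i hi
  simp only [List.length_pmap] at hi
  simp only [List.get_eq_getElem, List.getElem_pmap]
  exact hf _ _ _ _ (by simpa using hc i (by simpa using hi))

private lemma exists_ne_one {S : Submonoid M} (h : S ≠ ⊥) : ∃ x ∈ S, x ≠ 1 := by
  by_contra hc
  push_neg at hc
  exact h ((Submonoid.eq_bot_iff_forall S).2 hc)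

private lemma ne_bot_of {S : Submonoid M} {x : M} (hx : x ∈ S) (h1 : x ≠ 1) : S ≠ ⊥ := by
  intro hb
  rw [hb, Submonoid.mem_bot] at hx
  exact h1 hx

theorem stmt19_key (Bfam : Fin 2 → Submonoid M) (hBf : IsFactorization Bfam)
    {n : ℕ} (F : Fin n → Submonoid M) (hF : IsFactorization F)
    {J : Type} [LinearOrder J] (G : J → Submonoid M)
    (hGf : IsFactorization G) (hBG : Refines Bfam G) (hFG : Refines F G) :
    Refines Bfam F ↔ ∀ i, ¬ CutBy (Bfam 1) (Bfam 0) (F i) := by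
  classical
  have fin2 : ∀ x : Fin 2, x = 0 ∨ x = 1 := by decide
  have hdisj : ∀ x : M, x ∈ Bfam 0 → x ∈ Bfam 1 → x = 1 := by
    intro x h0 h1
    by_contra hx
    obtain ⟨l, -, hu⟩ := hBf.2 x (Submonoid.mem_top x)
    have e0 := hu [((0 : Fin 2), x)] ⟨List.isChain_singleton _, by simp [h0, hx], by simp⟩
    have e1 := hu [((1 : Fin 2), x)] ⟨List.isChain_singleton _, by simp [h1, hx], by simp⟩
    have := e1.trans e0.symm
    simp at this
  constructor
  · rintro ⟨φ, hφm, hφf⟩ i ⟨h1, h0⟩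
    have hle : F i ≤ Bfam (φ i) := (hφf (φ i)).1 ⟨i, rfl⟩
    rcases fin2 (φ i) with h | h
    · obtain ⟨x, hx, hne⟩ := exists_ne_one h1
      exact hne (hdisj x (h ▸ hle hx.2) hx.1)
    · obtain ⟨x, hx, hne⟩ := exists_ne_one h0
      exact hne (hdisj x hx.1 (h ▸ hle hx.2))
  · intro hcut
    obtain ⟨ψ, hψm, hψf⟩ := hBG
    obtain ⟨χ, hχm, hχf⟩ := hFG
    have hGB : ∀ j, G j ≤ Bfam (ψ j) := fun j => (hψf (ψ j)).1 ⟨j, rfl⟩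
    have hGF : ∀ j, G j ≤ F (χ j) := fun j => (hχf (χ j)).1 ⟨j, rfl⟩
    have hcut' : ∀ i, Bfam 1 ⊓ F i = ⊥ ∨ Bfam 0 ⊓ F i = ⊥ := by
      intro i
      have := hcut i
      rw [CutBy, not_and_or] at this
      rcases this with h | h
      · exact Or.inl (not_ne_iff.mp h)
      · exact Or.inr (not_ne_iff.mp h)
    have hχlt : ∀ {j j' : J}, χ j < χ j' → j < j' := by
      intro j j' h
      by_contra hle
      push_neg at hle
      exact (h.not_ge (hχm hle))
    have hconst : ∀ (j j' : J) (g g' : M), g ∈ G j → g ≠ 1 → g' ∈ G j' → g' ≠ 1 →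
        χ j = χ j' → ψ j = ψ j' := by
      intro j j' g g' hg hg1 hg' hg1' hχ
      by_contra hne
      have m1 : Bfam (ψ j) ⊓ F (χ j) ≠ ⊥ :=
        ne_bot_of (Submonoid.mem_inf.mpr ⟨hGB j hg, hGF j hg⟩) hg1
      have m2 : Bfam (ψ j') ⊓ F (χ j) ≠ ⊥ := by
        rw [hχ]
        exact ne_bot_of (Submonoid.mem_inf.mpr ⟨hGB j' hg', hGF j' hg'⟩) hg1'
      rcases fin2 (ψ j) with h | h <;> rcases fin2 (ψ j') with h' | h'
      · exact hne (h.trans h'.symm)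
      · rw [h] at m1; rw [h'] at m2
        exact (hcut' (χ j)).elim m2 m1
      · rw [h] at m1; rw [h'] at m2
        exact (hcut' (χ j)).elim m1 m2
      · exact hne (h.trans h'.symm)
    set φ : Fin n → Fin 2 := fun i =>
      if ∃ j, (∃ g ∈ G j, g ≠ 1) ∧ χ j ≤ i ∧ ψ j = 1 then 1 else 0 with hφdef
    have hφm : Monotone φ := by
      intro i i' hii
      by_cases h : ∃ j, (∃ g ∈ G j, g ≠ 1) ∧ χ j ≤ i ∧ ψ j = 1
      · obtain ⟨j, hg, hle, hψ⟩ := h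
        have h' : ∃ j, (∃ g ∈ G j, g ≠ 1) ∧ χ j ≤ i' ∧ ψ j = 1 :=
          ⟨j, hg, hle.trans hii, hψ⟩
        have e1 : φ i = 1 := by simp only [hφdef]; rw [if_pos ⟨j, hg, hle, hψ⟩]
        have e2 : φ i' = 1 := by simp only [hφdef]; rw [if_pos h']
        rw [e1, e2]
      · have e1 : φ i = 0 := by simp only [hφdef]; rw [if_neg h]
        rw [e1]
        exact Fin.zero_le _
    have hD : ∀ (j : J) (g : M), g ∈ G j → g ≠ 1 → φ (χ j) = ψ j := by
      intro j g hg hg1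
      rcases fin2 (ψ j) with h | h
      · have hno : ¬ ∃ j', (∃ g' ∈ G j', g' ≠ 1) ∧ χ j' ≤ χ j ∧ ψ j' = 1 := by
          rintro ⟨j', ⟨g', hg', hg1'⟩, hle, hψ1⟩
          rcases lt_or_eq_of_le hle with hlt | heq
          · have hlt' : j' < j := hχlt hlt
            have hmono := hψm hlt'.le
            rw [hψ1, h] at hmono
            exact absurd hmono (by decide)
          · have := hconst j' j g' g hg' hg1' hg hg1 heq
            rw [hψ1, h] at this
            exact absurd this (by decide)
        rw [h]
        simp only [hφdef]
        rw [if_neg hno]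
      · rw [h]
        simp only [hφdef]
        rw [if_pos ⟨j, ⟨g, hg, hg1⟩, le_refl _, h⟩]
    have hE : ∀ i, F i ≤ Bfam (φ i) := by
      intro i m hm
      obtain ⟨l, ⟨hc, hmem, hprod⟩, -⟩ := (hχf i).2 m hm
      rw [← hprod]
      refine Submonoid.list_prod_mem _ ?_
      intro x hx
      rw [List.mem_map] at hx
      obtain ⟨p, hp, rfl⟩ := hx
      have h1 := (hmem p hp).1
      have h2 := (hmem p hp).2
      have hd := hD p.1.1 p.2 h1 h2
      have hχp : χ p.1.1 = i := p.1.2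
      rw [hχp] at hd
      rw [hd]
      exact hGB _ h1
    -- fiber decompositions with respect to G
    have flspec : ∀ (i : Fin n) (y : M), y ∈ F i → ∃ L : List (J × M),
        List.Chain' (fun p q => q.1 < p.1) L ∧
        (∀ q ∈ L, χ q.1 = i ∧ q.2 ∈ G q.1 ∧ q.2 ≠ 1) ∧
        (L.map Prod.snd).prod = y ∧ (y ≠ 1 → L ≠ []) := by
      intro i y hy
      obtain ⟨l, ⟨hc, hmem, hprod⟩, -⟩ := (hχf i).2 y hy
      refine ⟨l.map (fun p => (p.1.1, p.2)), ?_, ?_, ?_, ?_⟩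
      · rw [List.Chain', List.isChain_map]
        exact hc.imp (fun a b h => h)
      · intro q hq
        rw [List.mem_map] at hq
        obtain ⟨p, hp, rfl⟩ := hq
        exact ⟨p.1.2, (hmem p hp).1, (hmem p hp).2⟩
      · rw [List.map_map]
        exact hprod
      · intro hy1 hnil
        rw [List.map_eq_nil_iff] at hnil
        rw [hnil] at hprod
        simp only [List.map_nil, List.prod_nil] at hprod
        exact hy1 hprod.symm
    choose fl hfl1 hfl2 hfl3 hfl4 using flspec
    -- a total version of the fiber decomposition
    set fl2 : Fin n × M → List (J × M) :=
      fun p => if h : p.2 ∈ F p.1 then fl p.1 p.2 h else [] with hfl2def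
    have fl2spec : ∀ p : Fin n × M, p.2 ∈ F p.1 →
        List.Chain' (fun a b => b.1 < a.1) (fl2 p) ∧
        (∀ q ∈ fl2 p, χ q.1 = p.1 ∧ q.2 ∈ G q.1 ∧ q.2 ≠ 1) ∧
        ((fl2 p).map Prod.snd).prod = p.2 ∧ (p.2 ≠ 1 → fl2 p ≠ []) := by
      intro p hp
      simp only [hfl2def, dif_pos hp]
      exact ⟨hfl1 p.1 p.2 hp, hfl2 p.1 p.2 hp, hfl3 p.1 p.2 hp, hfl4 p.1 p.2 hp⟩
    -- the main fact : any F-decomposition of an element of Bfam k uses only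
    -- indices i with φ i = k
    have hmain : ∀ (m : M) (l : List (Fin n × M)),
        List.Chain' (fun p q => q.1 < p.1) l →
        (∀ p ∈ l, p.2 ∈ F p.1 ∧ p.2 ≠ 1) →
        (l.map Prod.snd).prod = m →
        ∀ k : Fin 2, m ∈ Bfam k → ∀ p ∈ l, φ p.1 = k := by
      intro m l hc hmem hprod k hmk p hp
      set FL : List (List (J × M)) := l.map fl2 with hFL
      have hnn : ∀ p' ∈ l, fl2 p' ≠ [] := fun p' hp' =>
        (fl2spec p' (hmem p' hp').1).2.2.2 (hmem p' hp').2
      have hnilnot : [] ∉ FL := by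
        rw [hFL, List.mem_map]
        rintro ⟨p', hp', hnil⟩
        exact hnn p' hp' hnil
      -- FL.flatten is a G-decomposition of m
      have hLc : List.Chain' (fun a b => b.1 < a.1) FL.flatten := by
        rw [List.Chain', List.isChain_flatten hnilnot]
        constructor
        · intro L hL
          rw [hFL, List.mem_map] at hL
          obtain ⟨p', hp', rfl⟩ := hL
          exact (fl2spec p' (hmem p' hp').1).1
        · rw [hFL, List.isChain_map]
          refine (chain'_and_mem hc hmem).imp ?_
          rintro a b ⟨hab, ha, hb⟩ x hx y hy
          have hxa := ((fl2spec a ha.1).2.1 x (List.mem_of_mem_getLast? hx)).1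
          have hyb := ((fl2spec b hb.1).2.1 y (List.mem_of_mem_head? hy)).1
          exact hχlt (by rw [hxa, hyb]; exact hab)
      have hLmem : ∀ q ∈ FL.flatten, q.2 ∈ G q.1 ∧ q.2 ≠ 1 := by
        intro q hq
        rw [List.mem_flatten] at hq
        obtain ⟨L, hL, hqL⟩ := hq
        rw [hFL, List.mem_map] at hL
        obtain ⟨p', hp', rfl⟩ := hL
        exact ((fl2spec p' (hmem p' hp').1).2.1 q hqL).2
      have hLprod : (FL.flatten.map Prod.snd).prod = m := by
        rw [List.map_flatten, List.prod_flatten, hFL, List.map_map, List.map_map]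
        rw [← hprod]
        congr 1
        refine List.map_congr_left ?_
        intro p' hp'
        exact (fl2spec p' (hmem p' hp').1).2.2.1
      obtain ⟨l₀, -, hu₀⟩ := hGf.2 m (Submonoid.mem_top m)
      have hL0 : FL.flatten = l₀ := hu₀ _ ⟨hLc, hLmem, hLprod⟩
      -- the Bfam-k fiber decomposition of m also equals l₀
      obtain ⟨lB, ⟨hcB, hmB, hpB⟩, -⟩ := (hψf k).2 m hmk
      have hLB : lB.map (fun q => ((q.1 : J), q.2)) = l₀ := by
        refine hu₀ _ ⟨?_, ?_, ?_⟩
        · rw [List.Chain', List.isChain_map]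
          exact hcB.imp (fun a b h => h)
        · intro q hq
          rw [List.mem_map] at hq
          obtain ⟨q', hq', rfl⟩ := hq
          exact ⟨(hmB q' hq').1, (hmB q' hq').2⟩
        · rw [List.map_map]
          exact hpB
      -- now extract : an element of fl2 p
      obtain ⟨q, hq⟩ := List.exists_mem_of_ne_nil _ (hnn p hp)
      have hq1 := (fl2spec p (hmem p hp).1).2.1 q hq
      have hqL : q ∈ FL.flatten := by
        rw [List.mem_flatten]
        exact ⟨fl2 p, by rw [hFL]; exact List.mem_map_of_mem hp, hq⟩
      rw [hL0, ← hLB, List.mem_map] at hqL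
      obtain ⟨qB, hqB, hqe⟩ := hqL
      have hψq : ψ q.1 = k := by
        have : (qB.1 : J) = q.1 := congrArg Prod.fst hqe
        rw [← this]
        exact qB.1.2
      rw [← hq1.1, hD q.1 q.2 hq1.2.1 hq1.2.2, hψq]
    -- assemble the refinement
    refine ⟨φ, hφm, ?_⟩
    intro k
    constructor
    · rintro ⟨i, hi⟩
      have := hE i
      rw [hi] at this
      exact this
    · intro m hm
      obtain ⟨l, ⟨hc, hmem, hprod⟩, huF⟩ := hF.2 m (Submonoid.mem_top m)
      have hall : ∀ p ∈ l, φ p.1 = k := hmain m l hc hmem hprod k hm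
      have einj : Function.Injective
          (fun q : {i : Fin n // φ i = k} × M => ((q.1 : Fin n), q.2)) := by
        rintro ⟨⟨a, ha⟩, b⟩ ⟨⟨c, hc'⟩, d⟩ h
        simp only [Prod.mk.injEq] at h
        simp [h.1, h.2]
      have hback : ∀ (t : List (Fin n × M)) (ht : ∀ p ∈ t, φ p.1 = k),
          (t.pmap (fun p hp => ((⟨p.1, hp⟩ : {i : Fin n // φ i = k}), p.2)) ht).map
            (fun q => ((q.1 : Fin n), q.2)) = t := by
        intro t
        induction t with
        | nil => intro _; rfl
        | cons a t ih =>
          intro ht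
          simp only [List.pmap, List.map_cons, ih]
      refine ⟨l.pmap (fun p hp => ((⟨p.1, hp⟩ : {i : Fin n // φ i = k}), p.2)) hall,
        ⟨?_, ?_, ?_⟩, ?_⟩
      · refine chain'_pmap _ l hall hc ?_
        intro a ha b hb hab
        exact hab
      · intro q hq
        rw [List.mem_pmap] at hq
        obtain ⟨p, hp, rfl⟩ := hq
        exact hmem p hp
      · rw [List.map_pmap]
        rw [List.pmap_eq_map]
        exact hprod
      · intro l' hl'
        obtain ⟨hc', hmem', hprod'⟩ := hl'
        have hl'' : l'.map (fun q => ((q.1 : Fin n), q.2)) = l := by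
          refine huF _ ⟨?_, ?_, ?_⟩
          · rw [List.Chain', List.isChain_map]
            exact hc'.imp (fun a b h => h)
          · intro q hq
            rw [List.mem_map] at hq
            obtain ⟨q', hq', rfl⟩ := hq
            exact hmem' q' hq'
          · rw [List.map_map]
            exact hprod'
        refine List.map_injective_iff.mpr einj ?_
        rw [hl'', hback l hall]

end PCM

open PCM in
/-- if `B = (B₁,B₂)` is a bisection and `F = (Y_i)` a factorization of
`M(A,θ)` with `n > 1` factors admitting a common refinement `G` with `B`, then `F`
refines `B` iff no factor of `F` is cut by `B`. (Indices are decreasing from left to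
right, so the left factor `B₁` carries index `1` and `B₂` index `0`.) -/
theorem stmt_19 {A : Type*} (θ : A → A → Prop)
    (hanti : ∀ a, ¬ θ a a) (hsymm : ∀ a b, θ a b → θ b a)
    (B₁ B₂ : Submonoid (Trace A θ)) (Bfam : Fin 2 → Submonoid (Trace A θ))
    (hB1 : Bfam 1 = B₁) (hB0 : Bfam 0 = B₂) (hBf : IsFactorization Bfam)
    (n : ℕ) (hn : 1 < n)
    (F : Fin n → Submonoid (Trace A θ)) (hF : IsFactorization F)
    (hG : ∃ (J : Type) (_ : LinearOrder J) (G : J → Submonoid (Trace A θ)),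
      IsFactorization G ∧ Refines Bfam G ∧ Refines F G) :
    Refines Bfam F ↔ ∀ i, ¬ CutBy B₁ B₂ (F i) := by
  obtain ⟨J, _, G, hGf, hBG, hFG⟩ := hG
  subst hB1 hB0
  exact stmt19_key Bfam hBf F hF G hGf hBG hFG
end
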